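/- arXiv:1701.07324 — 5 statements merged into one kernel-verified Lean document; each statement's English description precedes it below -/
import Mathlib

section
/- Let D and D' be division rings and let m, n, m', n' ≥ 1 be integers. Put s = max{m, n} and k = max{m', n'}. Then there exists a graph homomorphism from D^{m×n} to D'^{m'×n'} if and only if |D|^s ≤ |D'|^k, where |D|^s and |D'|^k denote cardinal exponentiation. -/
/-!
A graph homomorphism is injective on cliques, and cliques control both directions.

The matrices supported on a single row (or column) form a clique of size `|D|^s`. Conversely, in a
clique through `0` any two members `x₁ c₁ᵀ`, `x₂ c₂ᵀ` have proportional columns `x` or proportional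
rows `c`; as proportionality is an equivalence relation, one of the two holds throughout the clique,
which therefore has at most `max (|D'|^m') (|D'|^n') = |D'|^k` elements. This gives necessity.

For sufficiency it is enough to colour `D^{m×n}` with `|D|^s` colours so that adjacent matrices get
different colours, and to send the colours injectively onto a clique of `D'^{m'×n'}`. If `D` is
infinite, `|D^{m×n}| = |D|^s` and every matrix gets its own colour. If `D` is finite it is a field,
and with a degree `s` extension `F` and independent `e i`, `f j` in `F`, the colouring
`A ↦ ∑ A i j • e i * f j` sends `x cᵀ` to `(∑ x i • e i) * (∑ c j • f j) ≠ 0`.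
-/

open Matrix

/-- Rank of a matrix over a division ring: dimension of the left row space. -/
noncomputable def mrank {D : Type} [DivisionRing D] {m n : ℕ} (A : Matrix (Fin m) (Fin n) D) : ℕ :=
  Module.finrank D (Submodule.span D (Set.range fun i : Fin m => fun j : Fin n => A i j))

open Cardinal Function

section RankOne

variable {D : Type} [DivisionRing D] {m n : ℕ}

lemma mrank_eq_finrank_span_row (A : Matrix (Fin m) (Fin n) D) :
    mrank A = Module.finrank D (Submodule.span D (Set.range A.row)) :=
  rfl

lemma mrank_zero : mrank (0 : Matrix (Fin m) (Fin n) D) = 0 := by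
  rw [mrank_eq_finrank_span_row, Submodule.span_eq_bot.2 (by rintro _ ⟨i, rfl⟩; rfl), finrank_bot]

lemma ne_of_mrank_sub_eq_one {X Y : Matrix (Fin m) (Fin n) D} (h : mrank (X - Y) = 1) :
    X ≠ Y := by
  rintro rfl
  simp [mrank_zero] at h

lemma mrank_vecMulVec {x : Fin m → D} {c : Fin n → D} (hx : x ≠ 0) (hc : c ≠ 0) :
    mrank (vecMulVec x c) = 1 := by
  obtain ⟨i, hi⟩ := Function.ne_iff.mp hx
  have hspan : Submodule.span D (Set.range (vecMulVec x c).row) = D ∙ c := by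
    refine le_antisymm (Submodule.span_le.2 ?_) (Submodule.span_singleton_le_iff_mem _ _ |>.2 ?_)
    · rintro _ ⟨i, rfl⟩
      exact Submodule.mem_span_singleton.2 ⟨x i, rfl⟩
    · have : (x i)⁻¹ • (vecMulVec x c).row i ∈ Submodule.span D (Set.range (vecMulVec x c).row) :=
        Submodule.smul_mem _ _ (Submodule.subset_span (Set.mem_range_self i))
      rwa [row_vecMulVec, smul_smul, inv_mul_cancel₀ hi, one_smul] at this
  rw [mrank_eq_finrank_span_row, hspan, finrank_span_singleton hc]

lemma mrank_eq_one_iff {A : Matrix (Fin m) (Fin n) D} :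
    mrank A = 1 ↔ ∃ x c, x ≠ 0 ∧ c ≠ 0 ∧ A = vecMulVec x c := by
  refine ⟨fun h => ?_, fun ⟨x, c, hx, hc, hA⟩ => hA ▸ mrank_vecMulVec hx hc⟩
  obtain ⟨c, hc, hrows⟩ := finrank_eq_one_iff'.mp h
  choose x hx using fun i => hrows ⟨A.row i, Submodule.subset_span (Set.mem_range_self i)⟩
  have hA : A = vecMulVec x c := funext fun i => (congrArg Subtype.val (hx i)).symm
  refine ⟨x, c, ?_, by simpa using hc, hA⟩
  rintro rfl
  simp [hA, mrank_zero] at h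

end RankOne

lemma exists_pairwise_mrank_sub_eq_one {D : Type} [DivisionRing D] {m n : ℕ}
    (hm : 1 ≤ m) (hn : 1 ≤ n) :
    ∃ g : (Fin (max m n) → D) → Matrix (Fin m) (Fin n) D,
      Pairwise fun v w => mrank (g v - g w) = 1 := by
  rcases le_total m n with h | h
  · rw [max_eq_right h]
    refine ⟨vecMulVec (Pi.single ⟨0, hm⟩ 1), fun v w hvw => ?_⟩
    dsimp only
    rw [← vecMulVec_sub]
    exact mrank_vecMulVec (by simp) (sub_ne_zero.2 hvw)
  · rw [max_eq_left h]
    refine ⟨(vecMulVec · (Pi.single ⟨0, hn⟩ 1)), fun v w hvw => ?_⟩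
    dsimp only
    rw [← sub_vecMulVec]
    exact mrank_vecMulVec (sub_ne_zero.2 hvw) (by simp)

lemma Submodule.span_singleton_eq_of_mem {K M : Type*} [DivisionRing K] [AddCommGroup M]
    [Module K M] {x y : M} (hy : y ≠ 0) (h : y ∈ K ∙ x) : (K ∙ y) = K ∙ x := by
  obtain ⟨a, rfl⟩ := Submodule.mem_span_singleton.1 h
  exact Submodule.span_singleton_smul_eq (IsUnit.mk0 a (by rintro rfl; simp at hy)) x

section Dichotomy

variable {D : Type} [DivisionRing D] {m n : ℕ}

-- The column `x` of `x cᵀ` is only determined up to right scalars, hence its line over `Dᵐᵒᵖ`.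
lemma span_eq_or_span_eq_of_mrank_sub_eq_one {x₁ x₂ : Fin m → D} {c₁ c₂ : Fin n → D}
    (hx₁ : x₁ ≠ 0) (hx₂ : x₂ ≠ 0) (hc₁ : c₁ ≠ 0) (hc₂ : c₂ ≠ 0)
    (h : mrank (vecMulVec x₁ c₁ - vecMulVec x₂ c₂) = 1) :
    (Dᵐᵒᵖ ∙ x₁) = (Dᵐᵒᵖ ∙ x₂) ∨ (D ∙ c₁) = (D ∙ c₂) := by
  by_cases hc : c₂ ∈ D ∙ c₁
  · exact .inr (Submodule.span_singleton_eq_of_mem hc₂ hc).symm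
  have hind := LinearIndependent.pair_iff.1 <| (LinearIndependent.pair_iff' hc₁).2 fun a ha =>
    hc (Submodule.mem_span_singleton.2 ⟨a, ha⟩)
  obtain ⟨x, c, hx, -, hA⟩ := mrank_eq_one_iff.mp h
  obtain ⟨i₀, hi₀⟩ := Function.ne_iff.mp hx
  have hrow (i : Fin m) : x₁ i • c₁ - x₂ i • c₂ = x i • c := congrArg (·.row i) hA
  obtain ⟨a, b, hc⟩ : ∃ a b : D, c = a • c₁ - b • c₂ :=
    ⟨_, _, by rw [← inv_smul_smul₀ hi₀ c, ← hrow, smul_sub, smul_smul, smul_smul]⟩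
  have hcoeff (i : Fin m) : x₁ i = x i * a ∧ x₂ i = x i * b := by
    have := hind (x₁ i - x i * a) (x i * b - x₂ i) <|
      calc _ = (x₁ i • c₁ - x₂ i • c₂) - x i • (a • c₁ - b • c₂) := by
              simp only [sub_smul, mul_smul, smul_sub]; abel
        _ = 0 := by rw [hrow, ← hc, sub_self]
    exact ⟨sub_eq_zero.1 this.1, (sub_eq_zero.1 this.2).symm⟩
  have hmem (y : Fin m → D) (t : D) (hy : ∀ i, y i = x i * t) : y ∈ Dᵐᵒᵖ ∙ x :=
    Submodule.mem_span_singleton.2 ⟨MulOpposite.op t, funext fun i => (hy i).symm⟩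
  left
  rw [Submodule.span_singleton_eq_of_mem hx₁ (hmem x₁ a fun i => (hcoeff i).1),
    Submodule.span_singleton_eq_of_mem hx₂ (hmem x₂ b fun i => (hcoeff i).2)]

end Dichotomy

lemma forall_eq_or_forall_eq_of_forall_eq_or {α β γ : Type*} {u : α → β} {v : α → γ}
    (h : ∀ a b, u a = u b ∨ v a = v b) : (∀ a b, u a = u b) ∨ ∀ a b, v a = v b := by
  refine or_iff_not_imp_right.2 fun hv => ?_
  push Not at hv
  obtain ⟨a₁, a₂, hv₁₂⟩ := hv
  have hu (a : α) : u a = u a₁ := by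
    have := h a₁ a₂; have := h a a₁; have := h a a₂
    grind
  exact fun a b => (hu a).trans (hu b).symm

section CliqueBound

variable {D : Type} [DivisionRing D] {m n : ℕ}

lemma vecMulVec_op_smul (t : Dᵐᵒᵖ) (x : Fin m → D) (c : Fin n → D) :
    vecMulVec (t • x) c = vecMulVec x (t.unop • c) := by
  ext i j
  simp [vecMulVec_apply, mul_assoc]

lemma mk_le_of_injective_vecMulVec_left {α : Type} {g : α → Matrix (Fin m) (Fin n) D}
    (hg : Injective g) (x : Fin m → D) (h : ∀ a, ∃ c, g a = vecMulVec x c) :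
    #α ≤ #(Fin n → D) := by
  choose c hc using h
  exact mk_le_of_injective (f := c) fun a b hab => hg (by rw [hc, hc, hab])

lemma mk_le_of_injective_vecMulVec_right {α : Type} {g : α → Matrix (Fin m) (Fin n) D}
    (hg : Injective g) (c : Fin n → D) (h : ∀ a, ∃ x, g a = vecMulVec x c) :
    #α ≤ #(Fin m → D) := by
  choose x hx using h
  exact mk_le_of_injective (f := x) fun a b hab => hg (by rw [hx, hx, hab])

theorem mk_le_max_of_pairwise_mrank_sub_eq_one {α : Type} {f : α → Matrix (Fin m) (Fin n) D}
    (hf : Pairwise fun a b => mrank (f a - f b) = 1) :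
    #α ≤ max #(Fin m → D) #(Fin n → D) := by
  rcases subsingleton_or_nontrivial α with hα | hα
  · exact le_max_of_le_left (mk_le_of_injective (f := fun _ => 0) (injective_of_subsingleton _))
  obtain ⟨a₀⟩ : Nonempty α := inferInstance
  obtain ⟨a₁, ha₁⟩ := exists_ne a₀
  have hg : Injective fun a => f a - f a₀ := fun a b hab => by
    by_contra hne
    exact ne_of_mrank_sub_eq_one (hf hne) (sub_left_injective hab)
  choose X C hX hC hXC using fun a : {a // a ≠ a₀} => mrank_eq_one_iff.1 (hf a.2)
  have hdich (a b : {a // a ≠ a₀}) : (Dᵐᵒᵖ ∙ X a) = (Dᵐᵒᵖ ∙ X b) ∨ (D ∙ C a) = (D ∙ C b) := by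
    rcases eq_or_ne a b with rfl | hab
    · exact .inl rfl
    refine span_eq_or_span_eq_of_mrank_sub_eq_one (hX a) (hX b) (hC a) (hC b) ?_
    rw [← hXC, ← hXC, sub_sub_sub_cancel_right]
    exact hf (Subtype.coe_ne_coe.2 hab)
  rcases forall_eq_or_forall_eq_of_forall_eq_or hdich with hcol | hrow
  · refine le_max_of_le_right (mk_le_of_injective_vecMulVec_left hg (X ⟨a₁, ha₁⟩) fun a => ?_)
    rcases eq_or_ne a a₀ with rfl | ha
    · exact ⟨0, by rw [sub_self]; ext; simp [vecMulVec_apply]⟩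
    obtain ⟨t, ht⟩ := Submodule.mem_span_singleton.1 <|
      hcol ⟨a, ha⟩ ⟨a₁, ha₁⟩ ▸ Submodule.mem_span_singleton_self (X ⟨a, ha⟩)
    exact ⟨t.unop • C ⟨a, ha⟩, by rw [hXC ⟨a, ha⟩, ← ht, vecMulVec_op_smul]⟩
  · refine le_max_of_le_left (mk_le_of_injective_vecMulVec_right hg (C ⟨a₁, ha₁⟩) fun a => ?_)
    rcases eq_or_ne a a₀ with rfl | ha
    · exact ⟨0, by rw [sub_self]; ext; simp [vecMulVec_apply]⟩
    obtain ⟨t, ht⟩ := Submodule.mem_span_singleton.1 <|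
      hrow ⟨a, ha⟩ ⟨a₁, ha₁⟩ ▸ Submodule.mem_span_singleton_self (C ⟨a, ha⟩)
    refine ⟨MulOpposite.op t • X ⟨a, ha⟩, ?_⟩
    rw [hXC ⟨a, ha⟩, ← ht, vecMulVec_op_smul, MulOpposite.unop_op]

end CliqueBound

section Coloring

variable {K F : Type} [Field K] [Ring F] [Algebra K F] {m n : ℕ}

def tensorMul (e : Fin m → F) (f : Fin n → F) (A : Matrix (Fin m) (Fin n) K) : F :=
  ∑ i, ∑ j, A i j • (e i * f j)

lemma tensorMul_sub (e : Fin m → F) (f : Fin n → F) (A B : Matrix (Fin m) (Fin n) K) :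
    tensorMul e f (A - B) = tensorMul e f A - tensorMul e f B := by
  simp only [tensorMul, Matrix.sub_apply, sub_smul, Finset.sum_sub_distrib]

lemma tensorMul_vecMulVec (e : Fin m → F) (f : Fin n → F) (x : Fin m → K) (c : Fin n → K) :
    tensorMul e f (vecMulVec x c) = (∑ i, x i • e i) * ∑ j, c j • f j := by
  simp only [tensorMul, vecMulVec_apply, Finset.sum_mul_sum, smul_mul_smul_comm]

lemma tensorMul_ne_of_mrank_sub_eq_one [IsDomain F] {e : Fin m → F} {f : Fin n → F}
    (he : LinearIndependent K e) (hf : LinearIndependent K f) {A B : Matrix (Fin m) (Fin n) K}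
    (h : mrank (A - B) = 1) : tensorMul e f A ≠ tensorMul e f B := by
  obtain ⟨x, c, hx, hc, hAB⟩ := mrank_eq_one_iff.1 h
  rw [← sub_ne_zero, ← tensorMul_sub, hAB, tensorMul_vecMulVec]
  refine mul_ne_zero (fun h0 => hx ?_) (fun h0 => hc ?_) <;> ext
  exacts [Fintype.linearIndependent_iff.1 he x h0 _, Fintype.linearIndependent_iff.1 hf c h0 _]

end Coloring

theorem exists_coloring_of_finite {K : Type} [Field K] [Finite K] {s m n : ℕ} [NeZero s]
    (hm : m ≤ s) (hn : n ≤ s) :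
    ∃ χ : Matrix (Fin m) (Fin n) K → (Fin s → K), ∀ A B, mrank (A - B) = 1 → χ A ≠ χ B := by
  obtain ⟨p, _⟩ := CharP.exists K
  have := Fact.mk (CharP.char_is_prime K p)
  let b := Module.finBasisOfFinrankEq K _ (FiniteField.finrank_extension K p s)
  have hb {t : ℕ} (ht : t ≤ s) : LinearIndependent K (b ∘ Fin.castLE ht) :=
    b.linearIndependent.comp _ (Fin.castLE_injective ht)
  exact ⟨b.equivFun ∘ tensorMul (b ∘ Fin.castLE hm) (b ∘ Fin.castLE hn),
    fun A B h => b.equivFun.injective.ne (tensorMul_ne_of_mrank_sub_eq_one (hb hm) (hb hn) h)⟩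

theorem exists_injective_of_infinite {D : Type} [Infinite D] {s m n : ℕ} (hs : s ≠ 0) :
    ∃ χ : Matrix (Fin m) (Fin n) D → (Fin s → D), Injective χ := by
  suffices #(Matrix (Fin m) (Fin n) D) ≤ #(Fin s → D) from
    let ⟨χ⟩ := (Cardinal.le_def _ _).1 this; ⟨χ, χ.injective⟩
  calc #(Matrix (Fin m) (Fin n) D) = #D ^ (m * n) := by simp [Matrix, pow_mul']
    _ ≤ #D := power_nat_le (aleph0_le_mk D)
    _ ≤ #D ^ s := le_self_pow (Cardinal.one_le_iff_ne_zero.2 (mk_ne_zero D)) hs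
    _ = #(Fin s → D) := by simp

theorem exists_coloring {D : Type} [DivisionRing D] {m n : ℕ} (hs : max m n ≠ 0) :
    ∃ χ : Matrix (Fin m) (Fin n) D → (Fin (max m n) → D),
      ∀ A B, mrank (A - B) = 1 → χ A ≠ χ B := by
  cases finite_or_infinite D
  · have : NeZero (max m n) := ⟨hs⟩
    exact exists_coloring_of_finite (le_max_left m n) (le_max_right m n)
  · obtain ⟨χ, hχ⟩ := exists_injective_of_infinite (D := D) (m := m) (n := n) hs
    exact ⟨χ, fun A B h => hχ.ne (ne_of_mrank_sub_eq_one h)⟩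

lemma mk_fin_fun (K : Type) (s : ℕ) : #(Fin s → K) = #K ^ (s : Cardinal) := by
  simp

lemma max_mk_fin_fun (K : Type) [Nonempty K] (m n : ℕ) :
    max #(Fin m → K) #(Fin n → K) = #(Fin (max m n) → K) := by
  refine (Monotone.map_max (f := fun s : ℕ => #(Fin s → K)) fun a b hab => ?_).symm
  simp only [mk_fin_fun]
  exact power_le_power_left (mk_ne_zero K) (Nat.cast_le.2 hab)

/-- Theorem 2.8: with `s = max m n` and `k = max m' n'`, there exists a graph homomorphism
from `D^{m×n}` to `D'^{m'×n'}` iff `|D|^s ≤ |D'|^k` (cardinal exponentiation). -/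
theorem exists_graph_hom_iff_cardinal_power_le
    {D D' : Type} [DivisionRing D] [DivisionRing D'] {m n m' n' : ℕ}
    (hm : 1 ≤ m) (hn : 1 ≤ n) (hm' : 1 ≤ m') (hn' : 1 ≤ n') :
    (∃ φ : Matrix (Fin m) (Fin n) D → Matrix (Fin m') (Fin n') D',
        ∀ X Y, mrank (X - Y) = 1 → mrank (φ X - φ Y) = 1) ↔
      Cardinal.mk D ^ ((max m n : ℕ) : Cardinal) ≤
        Cardinal.mk D' ^ ((max m' n' : ℕ) : Cardinal) := by
  rw [← mk_fin_fun, ← mk_fin_fun]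
  constructor
  · rintro ⟨φ, hφ⟩
    obtain ⟨g, hg⟩ := exists_pairwise_mrank_sub_eq_one (D := D) hm hn
    rw [← max_mk_fin_fun D']
    exact mk_le_max_of_pairwise_mrank_sub_eq_one fun v w hvw => hφ _ _ (hg hvw)
  · intro h
    obtain ⟨χ, hχ⟩ := exists_coloring (D := D) (m := m) (n := n) (by omega)
    obtain ⟨ι⟩ := (Cardinal.le_def _ _).1 h
    obtain ⟨g, hg⟩ := exists_pairwise_mrank_sub_eq_one (D := D') hm' hn'
    exact ⟨g ∘ ι ∘ χ, fun A B hAB => hg (ι.injective.ne (hχ A B hAB))⟩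
end

section
/- Let D and D' be division rings, let m, n, m', n' ≥ 2 be integers, and let k be an integer with 1 ≤ k ≤ min{m, n}. Suppose φ: D^{m×n} → D'^{m'×n'} satisfies rank(φ(X) − φ(Y)) = k whenever rank(X − Y) = k, and suppose there is a fixed matrix L ∈ D'^{n'×m'} such that I_{m'} + φ(X)·L is invertible for every X ∈ D^{m×n}. Define θ(X) = (I_{m'} + φ(X)·L)^{-1} φ(X) for X ∈ D^{m×n}. Then rank(θ(X) − θ(Y)) = k whenever rank(X − Y) = k. -/
/-!
The push-through identity `(1 + B L)⁻¹ B = B (1 + L B)⁻¹` gives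
`θ(X) - θ(Y) = (1 + φ(X) L)⁻¹ (φ(X) - φ(Y)) (1 + L φ(Y))⁻¹`,
and the rank is unchanged by multiplication with invertible matrices on either side.
-/

open Matrix

theorem Matrix.vecMulLinear_mul {R : Type*} [Semiring R] {l m n : Type*} [Fintype l] [Fintype m]
    (A : Matrix l m R) (B : Matrix m n R) :
    (A * B).vecMulLinear = B.vecMulLinear ∘ₗ A.vecMulLinear :=
  LinearMap.ext fun v => (vecMul_vecMul v A B).symm

section RankInvariance

variable {D : Type} [DivisionRing D] {m n : ℕ}

theorem mrank_eq_finrank_range_vecMulLinear (A : Matrix (Fin m) (Fin n) D) :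
    mrank A = Module.finrank D (LinearMap.range A.vecMulLinear) := by
  rw [range_vecMulLinear]
  rfl

theorem mrank_isUnit_mul {P : Matrix (Fin m) (Fin m) D} (hP : IsUnit P)
    (C : Matrix (Fin m) (Fin n) D) : mrank (P * C) = mrank C := by
  have hsurj : LinearMap.range P.vecMulLinear = ⊤ :=
    LinearMap.range_eq_top.2 <| vecMul_surjective_iff_exists_left_inverse.2
      ⟨_, Ring.inverse_mul_cancel P hP⟩
  rw [mrank_eq_finrank_range_vecMulLinear, mrank_eq_finrank_range_vecMulLinear, vecMulLinear_mul,
    LinearMap.range_comp_of_range_eq_top _ hsurj]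

theorem mrank_mul_isUnit (C : Matrix (Fin m) (Fin n) D) {Q : Matrix (Fin n) (Fin n) D}
    (hQ : IsUnit Q) : mrank (C * Q) = mrank C := by
  have hinj : Function.Injective Q.vecMulLinear := fun v w h => by
    simpa [vecMul_vecMul, Ring.mul_inverse_cancel Q hQ] using
      congrArg (· ᵥ* Ring.inverse Q) (show v ᵥ* Q = w ᵥ* Q from h)
  rw [mrank_eq_finrank_range_vecMulLinear, mrank_eq_finrank_range_vecMulLinear, vecMulLinear_mul,
    LinearMap.range_comp, ← (Submodule.equivMapOfInjective _ hinj _).finrank_eq]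

end RankInvariance

namespace Matrix

variable {R : Type*} [Ring R] {m n : Type*} [Fintype m] [Fintype n] [DecidableEq m]
  [DecidableEq n]

theorem isUnit_one_add_mul_swap {B : Matrix m n R} {L : Matrix n m R}
    (h : IsUnit (1 + B * L)) : IsUnit (1 + L * B) := by
  set iB := Ring.inverse (1 + B * L)
  refine isUnit_iff_exists.2 ⟨1 - L * iB * B, ?_, ?_⟩
  · calc (1 + L * B) * (1 - L * iB * B) = 1 + L * B - L * ((1 + B * L) * iB) * B := by
          simp only [Matrix.mul_add, Matrix.add_mul, Matrix.mul_sub, Matrix.mul_one,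
            Matrix.one_mul, Matrix.mul_assoc]
      _ = 1 := by rw [Ring.mul_inverse_cancel _ h, Matrix.mul_one, add_sub_cancel_right]
  · calc (1 - L * iB * B) * (1 + L * B) = 1 + L * B - L * (iB * (1 + B * L)) * B := by
          simp only [Matrix.mul_add, Matrix.add_mul, Matrix.sub_mul, Matrix.mul_one,
            Matrix.one_mul, Matrix.mul_assoc]
          abel
      _ = 1 := by rw [Ring.inverse_mul_cancel _ h, Matrix.mul_one, add_sub_cancel_right]

theorem one_add_mul_mul_comm (B : Matrix m n R) (L : Matrix n m R) :
    (1 + B * L) * B = B * (1 + L * B) := by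
  simp only [Matrix.add_mul, Matrix.mul_add, Matrix.one_mul, Matrix.mul_one, Matrix.mul_assoc]

theorem inverse_one_add_mul_mul {B : Matrix m n R} {L : Matrix n m R}
    (h : IsUnit (1 + B * L)) :
    Ring.inverse (1 + B * L) * B = B * Ring.inverse (1 + L * B) :=
  calc Ring.inverse (1 + B * L) * B
      = Ring.inverse (1 + B * L) * ((1 + B * L) * B) * Ring.inverse (1 + L * B) := by
        rw [one_add_mul_mul_comm, Matrix.mul_assoc, Matrix.mul_assoc B,
          Ring.mul_inverse_cancel _ (isUnit_one_add_mul_swap h), Matrix.mul_one]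
    _ = B * Ring.inverse (1 + L * B) := by
        rw [← Matrix.mul_assoc, Ring.inverse_mul_cancel _ h, Matrix.one_mul]

theorem inverse_one_add_mul_mul_sub {A B : Matrix m n R} {L : Matrix n m R}
    (hA : IsUnit (1 + A * L)) (hB : IsUnit (1 + B * L)) :
    Ring.inverse (1 + A * L) * A - Ring.inverse (1 + B * L) * B =
      Ring.inverse (1 + A * L) * (A - B) * Ring.inverse (1 + L * B) := by
  set iA := Ring.inverse (1 + A * L)
  set jB := Ring.inverse (1 + L * B)
  have hA' : iA * A = iA * (A * (1 + L * B)) * jB := by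
    rw [Matrix.mul_assoc iA, Matrix.mul_assoc A,
      Ring.mul_inverse_cancel _ (isUnit_one_add_mul_swap hB), Matrix.mul_one]
  have hB' : B * jB = iA * ((1 + A * L) * B) * jB := by
    rw [← Matrix.mul_assoc iA, Ring.inverse_mul_cancel _ hA, Matrix.one_mul]
  have hdiff : A * (1 + L * B) - (1 + A * L) * B = A - B := by
    simp only [Matrix.mul_add, Matrix.add_mul, Matrix.mul_one, Matrix.one_mul, Matrix.mul_assoc]
    abel
  rw [inverse_one_add_mul_mul hB, hA', hB', ← Matrix.sub_mul, ← Matrix.mul_sub, hdiff]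

end Matrix

theorem distance_k_preserving_of_left_inverse_twist_general
    {D D' : Type} [DivisionRing D] [DivisionRing D'] {m n m' n' k : ℕ}
    (φ : Matrix (Fin m) (Fin n) D → Matrix (Fin m') (Fin n') D')
    (hφ : ∀ X Y, mrank (X - Y) = k → mrank (φ X - φ Y) = k)
    (L : Matrix (Fin n') (Fin m') D')
    (hL : ∀ X, IsUnit (1 + φ X * L)) :
    ∀ X Y, mrank (X - Y) = k →
      mrank (Ring.inverse (1 + φ X * L) * φ X - Ring.inverse (1 + φ Y * L) * φ Y) = k := by
  intro X Y hXY
  rw [inverse_one_add_mul_mul_sub (hL X) (hL Y),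
    mrank_mul_isUnit _ (isUnit_one_add_mul_swap (hL Y)).ringInverse,
    mrank_isUnit_mul (hL X).ringInverse, hφ X Y hXY]

/-- Example 2.5: if `φ` preserves distance `k` and `I + φ(X)·L` is always invertible, then
`θ(X) = (I + φ(X)·L)⁻¹·φ(X)` also preserves distance `k`. -/
theorem distance_k_preserving_of_left_inverse_twist
    {D D' : Type} [DivisionRing D] [DivisionRing D'] {m n m' n' k : ℕ}
    (hm : 2 ≤ m) (hn : 2 ≤ n) (hm' : 2 ≤ m') (hn' : 2 ≤ n')
    (hk1 : 1 ≤ k) (hk2 : k ≤ min m n)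
    (φ : Matrix (Fin m) (Fin n) D → Matrix (Fin m') (Fin n') D')
    (hφ : ∀ X Y, mrank (X - Y) = k → mrank (φ X - φ Y) = k)
    (L : Matrix (Fin n') (Fin m') D')
    (hL : ∀ X, IsUnit (1 + φ X * L)) :
    ∀ X Y, mrank (X - Y) = k →
      mrank (Ring.inverse (1 + φ X * L) * φ X - Ring.inverse (1 + φ Y * L) * φ Y) = k :=
  distance_k_preserving_of_left_inverse_twist_general φ hφ L hL
end

section
/- Let D be a division ring, m, n ≥ 2, and let M and N be two distinct maximal sets in D^{m×n} of different types with M ∩ N ≠ ∅. Then for any A ∈ M ∩ N there exist invertible matrices P ∈ GL_m(D) and Q ∈ GL_n(D) such that M = P·M₁·Q + A = P·M₁ + A and N = P·N₁·Q + A = N₁·Q + A. -/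
open Matrix

/-- The standard maximal set of type one: matrices whose rows other than the first are zero. -/
def M1set (D : Type) [DivisionRing D] (m n : ℕ) : Set (Matrix (Fin m) (Fin n) D) :=
  {X | ∀ i j, i.val ≠ 0 → X i j = 0}

/-- The standard maximal set of type two: matrices whose columns other than the first are zero. -/
def N1set (D : Type) [DivisionRing D] (m n : ℕ) : Set (Matrix (Fin m) (Fin n) D) :=
  {X | ∀ i j, j.val ≠ 0 → X i j = 0}

/-- A maximal set of type one: a set of the form `P·M₁ + A` with `P` invertible. -/
def IsTypeOne {D : Type} [DivisionRing D] {m n : ℕ} (S : Set (Matrix (Fin m) (Fin n) D)) : Prop :=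
  ∃ P : Matrix (Fin m) (Fin m) D, ∃ A : Matrix (Fin m) (Fin n) D,
    IsUnit P ∧ S = (fun X => P * X + A) '' M1set D m n

/-- A maximal set of type two: a set of the form `N₁·Q + A` with `Q` invertible. -/
def IsTypeTwo {D : Type} [DivisionRing D] {m n : ℕ} (S : Set (Matrix (Fin m) (Fin n) D)) : Prop :=
  ∃ Q : Matrix (Fin n) (Fin n) D, ∃ A : Matrix (Fin m) (Fin n) D,
    IsUnit Q ∧ S = (fun X => X * Q + A) '' N1set D m n

/-! A maximal set `P·M₁ + A` is a coset of the additive group `P·M₁`, so any of its points can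
serve as the translation `A`. Moreover `M₁` is stable under right multiplication by invertible
matrices and `N₁` under left multiplication, so the missing factor `Q` (resp. `P`) can be inserted
without changing the set. -/

theorem AddSubgroup.image_add_eq_of_mem_image {G H : Type*} [AddGroup G] [AddCommGroup H]
    (f : G →+ H) (S : AddSubgroup G) {A₀ A : H} (hA : A ∈ (fun X => f X + A₀) '' (S : Set G)) :
    (fun X => f X + A₀) '' (S : Set G) = (fun X => f X + A) '' (S : Set G) := by
  obtain ⟨X₀, hX₀, rfl⟩ := hA
  ext Z
  constructor
  · rintro ⟨Y, hY, rfl⟩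
    exact ⟨Y - X₀, S.sub_mem hY hX₀, by simp only [map_sub]; abel⟩
  · rintro ⟨Y, hY, rfl⟩
    exact ⟨Y + X₀, S.add_mem hY hX₀, by simp only [map_add]; abel⟩

section StandardMaximalSets

variable {D : Type} [DivisionRing D] {m n : ℕ}

variable (D m n) in
def M1addSubgroup : AddSubgroup (Matrix (Fin m) (Fin n) D) where
  carrier := M1set D m n
  add_mem' hX hY i j h := by simp [hX i j h, hY i j h]
  zero_mem' _ _ _ := rfl
  neg_mem' hX i j h := by simp [hX i j h]

variable (D m n) in
def N1addSubgroup : AddSubgroup (Matrix (Fin m) (Fin n) D) where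
  carrier := N1set D m n
  add_mem' hX hY i j h := by simp [hX i j h, hY i j h]
  zero_mem' _ _ _ := rfl
  neg_mem' hX i j h := by simp [hX i j h]

theorem mul_mem_M1set {Y : Matrix (Fin m) (Fin n) D} (hY : Y ∈ M1set D m n)
    (Q : Matrix (Fin n) (Fin n) D) : Y * Q ∈ M1set D m n := fun i j h => by
  simp only [mul_apply]
  exact Finset.sum_eq_zero fun k _ => by rw [hY i k h, zero_mul]

theorem mul_mem_N1set (P : Matrix (Fin m) (Fin m) D) {Y : Matrix (Fin m) (Fin n) D}
    (hY : Y ∈ N1set D m n) : P * Y ∈ N1set D m n := fun i j h => by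
  simp only [mul_apply]
  exact Finset.sum_eq_zero fun k _ => by rw [hY k j h, mul_zero]

theorem M1set_image_mul_right {Q : Matrix (Fin n) (Fin n) D} (hQ : IsUnit Q) :
    (· * Q) '' M1set D m n = M1set D m n := by
  obtain ⟨u, rfl⟩ := hQ
  refine (Set.image_subset_iff.2 fun Y hY => mul_mem_M1set hY _).antisymm fun Y hY => ?_
  exact ⟨Y * ↑u⁻¹, mul_mem_M1set hY _, by simp [Matrix.mul_assoc]⟩

theorem N1set_image_mul_left {P : Matrix (Fin m) (Fin m) D} (hP : IsUnit P) :
    (P * ·) '' N1set D m n = N1set D m n := by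
  obtain ⟨u, rfl⟩ := hP
  refine (Set.image_subset_iff.2 fun Y hY => mul_mem_N1set _ hY).antisymm fun Y hY => ?_
  exact ⟨↑u⁻¹ * Y, mul_mem_N1set _ hY, by simp [← Matrix.mul_assoc]⟩

end StandardMaximalSets

theorem maximal_sets_of_different_types_general
    {D : Type} [DivisionRing D] {m n : ℕ}
    (M N : Set (Matrix (Fin m) (Fin n) D))
    (hM : IsTypeOne M) (hN : IsTypeTwo N) :
    ∀ A ∈ M ∩ N,
      ∃ P : Matrix (Fin m) (Fin m) D, ∃ Q : Matrix (Fin n) (Fin n) D,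
        IsUnit P ∧ IsUnit Q ∧
        M = (fun X => P * X * Q + A) '' M1set D m n ∧
        M = (fun X => P * X + A) '' M1set D m n ∧
        N = (fun X => P * X * Q + A) '' N1set D m n ∧
        N = (fun X => X * Q + A) '' N1set D m n := by
  rintro A ⟨hAM, hAN⟩
  obtain ⟨P, A₀, hP, rfl⟩ := hM
  obtain ⟨Q, B₀, hQ, rfl⟩ := hN
  have hM : (fun X => P * X + A₀) '' M1set D m n = (fun X => P * X + A) '' M1set D m n :=
    (M1addSubgroup D m n).image_add_eq_of_mem_image (addMonoidHomMulLeft P) hAM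
  have hN : (fun X => X * Q + B₀) '' N1set D m n = (fun X => X * Q + A) '' N1set D m n :=
    (N1addSubgroup D m n).image_add_eq_of_mem_image (addMonoidHomMulRight Q) hAN
  have hMQ : (fun X => P * X * Q + A) '' M1set D m n = (fun X => P * X + A) '' M1set D m n := by
    conv_rhs => rw [← M1set_image_mul_right hQ, Set.image_image]
    simp only [Matrix.mul_assoc]
  have hNP : (fun X => P * X * Q + A) '' N1set D m n = (fun X => X * Q + A) '' N1set D m n := by
    conv_rhs => rw [← N1set_image_mul_left hP, Set.image_image]
  exact ⟨P, Q, hP, hQ, hM.trans hMQ.symm, hM, hN.trans hNP.symm, hN⟩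

/-- Lemma 3.4(i): if `M` and `N` are distinct maximal sets of different types with
`M ∩ N ≠ ∅`, then for any `A ∈ M ∩ N` there are invertible `P`, `Q` with
`M = P·M₁·Q + A = P·M₁ + A` and `N = P·N₁·Q + A = N₁·Q + A`. -/
theorem maximal_sets_of_different_types
    {D : Type} [DivisionRing D] {m n : ℕ} (hm : 2 ≤ m) (hn : 2 ≤ n)
    (M N : Set (Matrix (Fin m) (Fin n) D))
    (hM : IsTypeOne M) (hN : IsTypeTwo N) (hMN : M ≠ N) (hne : (M ∩ N).Nonempty) :
    ∀ A ∈ M ∩ N,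
      ∃ P : Matrix (Fin m) (Fin m) D, ∃ Q : Matrix (Fin n) (Fin n) D,
        IsUnit P ∧ IsUnit Q ∧
        M = (fun X => P * X * Q + A) '' M1set D m n ∧
        M = (fun X => P * X + A) '' M1set D m n ∧
        N = (fun X => P * X * Q + A) '' N1set D m n ∧
        N = (fun X => X * Q + A) '' N1set D m n :=
  maximal_sets_of_different_types_general M N hM hN
end

section
/- Let D be a division ring, m, n ≥ 2, and let M and N be two distinct maximal sets in D^{m×n} that are both of type one (resp. both of type two) with M ∩ N ≠ ∅. Then M ∩ N = {A} for a single matrix A, and there exists an invertible matrix P ∈ GL_m(D) (resp. Q ∈ GL_n(D)) such that M = P·M₁ + A and N = P·M₂ + A (resp. M = N₁·Q + A and N = N₂·Q + A), where M₂ denotes the set of matrices whose rows other than the second are zero and N₂ the set of matrices whose columns other than the second are zero. -/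
open Matrix

/-- Matrices whose rows other than the second are zero. -/
def M2set (D : Type) [DivisionRing D] (m n : ℕ) : Set (Matrix (Fin m) (Fin n) D) :=
  {X | ∀ i j, i.val ≠ 1 → X i j = 0}

/-- Matrices whose columns other than the second are zero. -/
def N2set (D : Type) [DivisionRing D] (m n : ℕ) : Set (Matrix (Fin m) (Fin n) D) :=
  {X | ∀ i j, j.val ≠ 1 → X i j = 0}

/-!
A type-two set through `A` is `A` plus the matrices whose rows are all left multiples of one
nonzero row vector `r`. Two such sets through a common point `A` coincide when their rows `r, s`
are proportional; otherwise `r, s` are linearly independent, so the sets meet only in `A`, and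
extending `r, s` to a basis of `Dⁿ` gives the invertible `Q` with first two rows `r, s`. Type one
reduces to type two over `Dᵐᵒᵖ` through `X ↦ (Xᵀ)ᵒᵖ`, which reverses matrix products.
-/

open MulOpposite

section RowMultiples

variable {D : Type*} [DivisionRing D] {m n : Type*}

def rowMultiples (r : n → D) : Set (Matrix m n D) :=
  Set.range fun x : m → D => vecMulVec x r

theorem rowMultiples_single_one [DecidableEq n] (k : n) :
    (rowMultiples (Pi.single k 1) : Set (Matrix m n D)) = {X | ∀ i j, j ≠ k → X i j = 0} := by
  ext X
  constructor
  · rintro ⟨x, rfl⟩ i j hj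
    simp [vecMulVec_apply, hj]
  · intro hX
    refine ⟨fun i => X i k, Matrix.ext fun i j => ?_⟩
    by_cases hj : j = k
    · simp [vecMulVec_apply, hj]
    · simp [vecMulVec_apply, hj, hX i j hj]

theorem image_mul_add_rowMultiples [Fintype n] (Q : Matrix n n D) (A : Matrix m n D)
    (r : n → D) :
    (fun X => X * Q + A) '' rowMultiples r = (· + A) '' rowMultiples (r ᵥ* Q) := by
  simp only [rowMultiples, ← Set.range_comp, Function.comp_def, vecMulVec_mul]

theorem image_add_rowMultiples_eq_of_mem {r : n → D} {A B : Matrix m n D}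
    (hB : B ∈ (· + A) '' rowMultiples r) :
    (· + A) '' rowMultiples r = (· + B) '' rowMultiples r := by
  obtain ⟨_, ⟨x₀, rfl⟩, rfl⟩ := hB
  ext Y
  constructor
  · rintro ⟨_, ⟨x, rfl⟩, rfl⟩
    exact ⟨_, ⟨x - x₀, rfl⟩, by simp only [sub_vecMulVec]; abel⟩
  · rintro ⟨_, ⟨x, rfl⟩, rfl⟩
    exact ⟨_, ⟨x + x₀, rfl⟩, by simp only [add_vecMulVec]; abel⟩

theorem rowMultiples_smul_subset (c : D) (r : n → D) :
    (rowMultiples (c • r) : Set (Matrix m n D)) ⊆ rowMultiples r := by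
  rintro _ ⟨x, rfl⟩
  exact ⟨op c • x, (vecMulVec_smul' x c r).symm⟩

theorem rowMultiples_eq_of_not_linearIndependent {r s : n → D} (hr : r ≠ 0) (hs : s ≠ 0)
    (h : ¬LinearIndependent D ![r, s]) :
    (rowMultiples r : Set (Matrix m n D)) = rowMultiples s := by
  obtain ⟨c, rfl⟩ : ∃ c : D, c • r = s := by
    simpa [LinearIndependent.pair_iff' hr] using h
  have hc : c ≠ 0 := by rintro rfl; simp at hs
  refine (rowMultiples_smul_subset c r).antisymm' ?_
  simpa [smul_smul, hc] using rowMultiples_smul_subset (m := m) c⁻¹ (c • r)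

theorem rowMultiples_inter_rowMultiples_of_linearIndependent {r s : n → D}
    (h : LinearIndependent D ![r, s]) :
    (rowMultiples r ∩ rowMultiples s : Set (Matrix m n D)) = {0} := by
  refine Set.eq_singleton_iff_unique_mem.mpr
    ⟨⟨⟨0, zero_vecMulVec r⟩, ⟨0, zero_vecMulVec s⟩⟩, ?_⟩
  rintro _ ⟨⟨x, rfl⟩, ⟨y, hxy⟩⟩
  dsimp only at hxy ⊢
  have hx : x = 0 := funext fun i => by
    refine (LinearIndependent.pair_iff.mp h (x i) (-y i) ?_).1
    rw [neg_smul, ← row_vecMulVec, ← row_vecMulVec, ← hxy, add_neg_cancel]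
  rw [hx, zero_vecMulVec]

end RowMultiples

section Basis

variable {D : Type*} [DivisionRing D] {ι : Type*} [Fintype ι] [DecidableEq ι]

theorem row_ne_zero_of_isUnit {Q : Matrix ι ι D} (hQ : IsUnit Q) (k : ι) : Q k ≠ 0 := by
  intro hk
  obtain ⟨B, hB⟩ := hQ.exists_right_inv
  simpa [mul_apply, hk] using congrFun (congrFun hB k) k

theorem isUnit_of_basis_rows (b : Module.Basis ι D (ι → D)) : IsUnit (Matrix.of b) := by
  obtain ⟨B, hB⟩ := (vecMul_surjective_iff_exists_left_inverse (A := Matrix.of b)).mp fun y =>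
    ⟨b.repr y, (vecMul_eq_sum _ _).trans (b.sum_repr y)⟩
  exact .of_mul_eq_one_right B hB

theorem Module.Basis.sumExtend_inl {κ V : Type*} [AddCommGroup V] [Module D V] {v : κ → V}
    (hv : LinearIndependent D v) (i : κ) : Module.Basis.sumExtend hv (.inl i) = v i := by
  rw [Module.Basis.sumExtend, Module.Basis.reindex_apply, Module.Basis.extend_apply_self]
  rfl

theorem exists_isUnit_rows_of_linearIndependent {n : ℕ} (hn : 2 ≤ n) {r s : Fin n → D}
    (h : LinearIndependent D ![r, s]) :
    ∃ Q : Matrix (Fin n) (Fin n) D, IsUnit Q ∧ Q ⟨0, by omega⟩ = r ∧ Q ⟨1, hn⟩ = s := by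
  set b := Module.Basis.sumExtend h
  have : Finite (Fin 2 ⊕ Module.Basis.sumExtendIndex h) := Module.Finite.finite_basis b
  have : Finite (Module.Basis.sumExtendIndex h) :=
    .of_injective _ (Sum.inr_injective (α := Fin 2))
  have hcard : Nat.card (Module.Basis.sumExtendIndex h) = n - 2 := by
    have := Module.finrank_eq_nat_card_basis b
    rw [Module.finrank_fin_fun, Nat.card_sum, Nat.card_eq_fintype_card, Fintype.card_fin] at this
    omega
  set e : Fin 2 ⊕ Module.Basis.sumExtendIndex h ≃ Fin n :=
    (Equiv.sumCongr (.refl _) (Finite.equivFinOfCardEq hcard)).trans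
      (finSumFinEquiv.trans (finCongr (by omega)))
  have he : ∀ (i : Fin 2) (k : Fin n), k.val = i.val →
      Matrix.of (b.reindex e) k = ![r, s] i := by
    intro i k hk
    have hek : e.symm k = .inl i := e.symm_apply_eq.mpr (Fin.ext (by simp [e, hk]))
    change b.reindex e k = _
    rw [Module.Basis.reindex_apply, hek, Module.Basis.sumExtend_inl]
  exact ⟨Matrix.of (b.reindex e), isUnit_of_basis_rows _, he 0 _ rfl, he 1 _ rfl⟩

end Basis

section TypeTwo

variable {D : Type} [DivisionRing D] {m n : ℕ}

theorem N1set_eq_rowMultiples (hn : 0 < n) :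
    N1set D m n = rowMultiples (Pi.single ⟨0, hn⟩ 1) := by
  simp only [rowMultiples_single_one, N1set, Ne, Fin.ext_iff]

theorem N2set_eq_rowMultiples (hn : 1 < n) :
    N2set D m n = rowMultiples (Pi.single ⟨1, hn⟩ 1) := by
  simp only [rowMultiples_single_one, N2set, Ne, Fin.ext_iff]

theorem image_mul_add_N1set (hn : 0 < n) (Q : Matrix (Fin n) (Fin n) D)
    (A : Matrix (Fin m) (Fin n) D) :
    (fun X => X * Q + A) '' N1set D m n = (· + A) '' rowMultiples (Q ⟨0, hn⟩) := by
  rw [N1set_eq_rowMultiples hn, image_mul_add_rowMultiples, single_one_vecMul, row]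

theorem image_mul_add_N2set (hn : 1 < n) (Q : Matrix (Fin n) (Fin n) D)
    (A : Matrix (Fin m) (Fin n) D) :
    (fun X => X * Q + A) '' N2set D m n = (· + A) '' rowMultiples (Q ⟨1, hn⟩) := by
  rw [N2set_eq_rowMultiples hn, image_mul_add_rowMultiples, single_one_vecMul, row]

variable {M N : Set (Matrix (Fin m) (Fin n) D)} {A : Matrix (Fin m) (Fin n) D}

theorem IsTypeTwo.exists_eq_image_add_rowMultiples (hn : 0 < n) (hM : IsTypeTwo M)
    (hA : A ∈ M) :
    ∃ r ≠ 0, M = (· + A) '' rowMultiples r := by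
  obtain ⟨Q, A₀, hQ, rfl⟩ := hM
  rw [image_mul_add_N1set hn] at hA ⊢
  exact ⟨_, row_ne_zero_of_isUnit hQ _, image_add_rowMultiples_eq_of_mem hA⟩

theorem IsTypeTwo.exists_linearIndependent (hn : 0 < n) (hM : IsTypeTwo M) (hN : IsTypeTwo N)
    (hMN : M ≠ N) (hA : A ∈ M ∩ N) :
    ∃ r s : Fin n → D, LinearIndependent D ![r, s] ∧
      M = (· + A) '' rowMultiples r ∧ N = (· + A) '' rowMultiples s := by
  obtain ⟨r, hr, rfl⟩ := hM.exists_eq_image_add_rowMultiples hn hA.1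
  obtain ⟨s, hs, rfl⟩ := hN.exists_eq_image_add_rowMultiples hn hA.2
  refine ⟨r, s, ?_, rfl, rfl⟩
  by_contra h
  exact hMN (by rw [rowMultiples_eq_of_not_linearIndependent hr hs h])

theorem IsTypeTwo.inter_eq_singleton_and_exists_N1set_N2set (hn : 2 ≤ n) (hM : IsTypeTwo M)
    (hN : IsTypeTwo N) (hMN : M ≠ N) (hA : A ∈ M ∩ N) :
    M ∩ N = {A} ∧ ∃ Q : Matrix (Fin n) (Fin n) D, IsUnit Q ∧
      M = (fun X => X * Q + A) '' N1set D m n ∧ N = (fun X => X * Q + A) '' N2set D m n := by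
  obtain ⟨r, s, hrs, rfl, rfl⟩ := hM.exists_linearIndependent (by omega) hN hMN hA
  obtain ⟨Q, hQ, rfl, rfl⟩ := exists_isUnit_rows_of_linearIndependent hn hrs
  refine ⟨?_, Q, hQ, (image_mul_add_N1set _ Q A).symm, (image_mul_add_N2set hn Q A).symm⟩
  rw [← Set.image_inter (add_left_injective A),
    rowMultiples_inter_rowMultiples_of_linearIndependent hrs, Set.image_singleton, zero_add]

end TypeTwo

section OpTranspose

variable {D : Type*} [Semiring D] {l m n : Type*}

def opTranspose : Matrix m n D ≃+ Matrix n m Dᵐᵒᵖ :=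
  (transposeAddEquiv m n D).trans opAddEquiv.mapMatrix

theorem opTranspose_apply (X : Matrix m n D) (i : n) (j : m) : opTranspose X i j = op (X j i) :=
  rfl

theorem opTranspose_mul [Fintype m] (P : Matrix l m D) (X : Matrix m n D) :
    opTranspose (P * X) = opTranspose X * opTranspose P := by
  ext i j
  simp [opTranspose_apply, mul_apply]

theorem isUnit_opTranspose_iff [Fintype m] [DecidableEq m] {P : Matrix m m D} :
    IsUnit (opTranspose P) ↔ IsUnit P :=
  (isUnit_map_iff RingEquiv.mopMatrix (opTranspose P)).symm.trans isUnit_op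

theorem image_opTranspose_image_mul_add [Fintype m] (P : Matrix m m D) (A : Matrix m n D)
    (S : Set (Matrix m n D)) :
    opTranspose '' ((fun X => P * X + A) '' S) =
      (fun Y => Y * opTranspose P + opTranspose A) '' (opTranspose '' S) := by
  simp only [Set.image_image, map_add, opTranspose_mul]

end OpTranspose

section TypeOne

variable {D : Type} [DivisionRing D] {m n : ℕ}

theorem image_opTranspose_M1set : opTranspose '' M1set D m n = N1set Dᵐᵒᵖ n m := by
  refine (congrArg _ ?_).trans (Set.image_preimage_eq _ opTranspose.surjective)
  ext X
  simp [M1set, N1set, opTranspose_apply, forall_comm (α := Fin m)]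

theorem image_opTranspose_M2set : opTranspose '' M2set D m n = N2set Dᵐᵒᵖ n m := by
  refine (congrArg _ ?_).trans (Set.image_preimage_eq _ opTranspose.surjective)
  ext X
  simp [M2set, N2set, opTranspose_apply, forall_comm (α := Fin m)]

variable {M N : Set (Matrix (Fin m) (Fin n) D)} {A : Matrix (Fin m) (Fin n) D}

theorem IsTypeOne.image_opTranspose (hM : IsTypeOne M) : IsTypeTwo (opTranspose '' M) := by
  obtain ⟨P, A, hP, rfl⟩ := hM
  exact ⟨opTranspose P, opTranspose A, isUnit_opTranspose_iff.mpr hP,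
    by rw [image_opTranspose_image_mul_add, image_opTranspose_M1set]⟩

theorem IsTypeOne.inter_eq_singleton_and_exists_M1set_M2set (hm : 2 ≤ m) (hM : IsTypeOne M)
    (hN : IsTypeOne N) (hMN : M ≠ N) (hA : A ∈ M ∩ N) :
    M ∩ N = {A} ∧ ∃ P : Matrix (Fin m) (Fin m) D, IsUnit P ∧
      M = (fun X => P * X + A) '' M1set D m n ∧ N = (fun X => P * X + A) '' M2set D m n := by
  have hinj := (opTranspose : Matrix (Fin m) (Fin n) D ≃+ _).injective.image_injective
  obtain ⟨hinter, Q, hQ, hM', hN'⟩ :=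
    hM.image_opTranspose.inter_eq_singleton_and_exists_N1set_N2set hm hN.image_opTranspose
      (hinj.ne hMN) ⟨Set.mem_image_of_mem _ hA.1, Set.mem_image_of_mem _ hA.2⟩
  obtain ⟨P, rfl⟩ := opTranspose.surjective Q
  refine ⟨hinj ?_, P, isUnit_opTranspose_iff.mp hQ, hinj ?_, hinj ?_⟩
  · rw [Set.image_inter opTranspose.injective, hinter, Set.image_singleton]
  · rw [image_opTranspose_image_mul_add, image_opTranspose_M1set, hM']
  · rw [image_opTranspose_image_mul_add, image_opTranspose_M2set, hN']

end TypeOne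

/-- Lemma 3.4(ii): if `M` and `N` are distinct maximal sets of the same type with
`M ∩ N ≠ ∅`, then `M ∩ N = {A}` for a single matrix `A`, and (in the type one case)
there is an invertible `P` with `M = P·M₁ + A`, `N = P·M₂ + A`, resp. (in the type two case)
an invertible `Q` with `M = N₁·Q + A`, `N = N₂·Q + A`. -/
theorem maximal_sets_of_same_type
    {D : Type} [DivisionRing D] {m n : ℕ} (hm : 2 ≤ m) (hn : 2 ≤ n)
    (M N : Set (Matrix (Fin m) (Fin n) D))
    (htype : (IsTypeOne M ∧ IsTypeOne N) ∨ (IsTypeTwo M ∧ IsTypeTwo N))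
    (hMN : M ≠ N) (hne : (M ∩ N).Nonempty) :
    ∃ A : Matrix (Fin m) (Fin n) D, M ∩ N = {A} ∧
      ((IsTypeOne M ∧ IsTypeOne N) →
        ∃ P : Matrix (Fin m) (Fin m) D, IsUnit P ∧
          M = (fun X => P * X + A) '' M1set D m n ∧
          N = (fun X => P * X + A) '' M2set D m n) ∧
      ((IsTypeTwo M ∧ IsTypeTwo N) →
        ∃ Q : Matrix (Fin n) (Fin n) D, IsUnit Q ∧
          M = (fun X => X * Q + A) '' N1set D m n ∧
          N = (fun X => X * Q + A) '' N2set D m n) := by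
  obtain ⟨A, hA⟩ := hne
  refine ⟨A, ?_, fun h => (h.1.inter_eq_singleton_and_exists_M1set_M2set hm h.2 hMN hA).2,
    fun h => (h.1.inter_eq_singleton_and_exists_N1set_N2set hn h.2 hMN hA).2⟩
  rcases htype with h | h
  exacts [(h.1.inter_eq_singleton_and_exists_M1set_M2set hm h.2 hMN hA).1,
    (h.1.inter_eq_singleton_and_exists_N1set_N2set hn h.2 hMN hA).1]
end

section
/- Let D and D' be division rings, m, n, m', n' ≥ 2, and let φ: D^{m×n} → D'^{m'×n'} be a non-degenerate graph homomorphism with φ(0) = 0. Suppose M and N are two distinct maximal sets in D^{m×n} of the same type (resp. of different types) with 0 ∈ M and M ∩ N ≠ ∅. Then there exist maximal sets M' and N' in D'^{m'×n'} of the same type (resp. of different types) such that φ(M) ⊆ M' and φ(N) ⊆ N'. -/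
/-!
The maximal sets through a matrix `B` are the lines `B + c xᵀ` (type one) and `B + u rᵀ`
(type two). Two lines of the same type through `B` that meet again coincide, two lines of
opposite types through `B` meet in a second point, and every matrix at rank distance at most one
from `B` lies on a line of each type through `B`. Since a set of pairwise adjacent matrices lies
on a line, a homomorphism maps every maximal set into one.

Take `B ∈ M ∩ N` (of rank at most one, as `0 ∈ M`) and maximal sets `M' ⊇ φ(M)`, `N' ⊇ φ(N)`.
If `M`, `N` have the same type but `M'`, `N'` do not, every line `L` through `B` of the other
type meets `M` and `N` away from `B`, so the maximal set containing `φ(L)` is `M'` or `N'`; these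
lines cover the ball around `B`, and `φ` is degenerate. If `M`, `N` have opposite types but
`M'`, `N'` the same type, then `M' = N'`; either the whole ball maps into `M'`, or some line `L`
through `B` of the type of `N` maps into a set of the other type, and the pair `N`, `L` falls
under the first case.
-/

open Matrix

/-- A maximal set (maximal clique of the adjacency graph): of type one or type two. -/
def IsMaximalSet {D : Type} [DivisionRing D] {m n : ℕ}
    (S : Set (Matrix (Fin m) (Fin n) D)) : Prop :=
  IsTypeOne S ∨ IsTypeTwo S

/-- A graph homomorphism `φ` is degenerate if there is a matrix `A` of rank at most one and two
maximal sets of different types `Ms`, `Ns` in the target with `φ A ∈ Ms ∩ Ns` and the image of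
the unit ball around `A` contained in `Ms ∪ Ns`. -/
def Degenerate {D D' : Type} [DivisionRing D] [DivisionRing D'] {m n m' n' : ℕ}
    (φ : Matrix (Fin m) (Fin n) D → Matrix (Fin m') (Fin n') D') : Prop :=
  ∃ A : Matrix (Fin m) (Fin n) D, mrank A ≤ 1 ∧
    ∃ Ms Ns : Set (Matrix (Fin m') (Fin n') D'),
      IsTypeOne Ms ∧ IsTypeTwo Ns ∧ φ A ∈ Ms ∩ Ns ∧
      φ '' {X | mrank (X - A) ≤ 1} ⊆ Ms ∪ Ns

section OuterProducts

variable {K : Type*} [DivisionRing K] {ι κ : Type*}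

theorem exists_mul_eq_of_vecMulVec_eq {u x : ι → K} {v y : κ → K}
    (h : vecMulVec u v = vecMulVec x y) (hne : vecMulVec u v ≠ 0) :
    (∃ μ : K, x = fun i => u i * μ) ∧ ∃ a : K, y = a • v := by
  obtain ⟨i₀, j₀, h₀⟩ : ∃ i j, u i * v j ≠ 0 := by
    by_contra! H
    exact hne (Matrix.ext H)
  have hij (i j) : u i * v j = x i * y j := congr_fun (congr_fun h i) j
  have hx : x i₀ ≠ 0 := left_ne_zero_of_mul (hij i₀ j₀ ▸ h₀)
  have hy : y j₀ ≠ 0 := right_ne_zero_of_mul (hij i₀ j₀ ▸ h₀)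
  refine ⟨⟨v j₀ * (y j₀)⁻¹, funext fun i => ?_⟩, ⟨(x i₀)⁻¹ * u i₀, funext fun j => ?_⟩⟩
  · rw [← mul_assoc, hij, mul_assoc, mul_inv_cancel₀ hy, mul_one]
  · rw [Pi.smul_apply, smul_eq_mul, mul_assoc, hij, ← mul_assoc, inv_mul_cancel₀ hx, one_mul]

end OuterProducts

section InvertibleMatrices

variable {ι : Type*} [Fintype ι] [DecidableEq ι]

theorem mulVec_ne_zero_of_isUnit {R : Type*} [Ring R] {P : Matrix ι ι R} (hP : IsUnit P)
    {v : ι → R} (hv : v ≠ 0) : P *ᵥ v ≠ 0 := by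
  intro h
  apply hv
  rw [← one_mulVec v, ← hP.val_inv_mul, ← mulVec_mulVec, h, mulVec_zero]

theorem vecMul_ne_zero_of_isUnit {R : Type*} [Ring R] {P : Matrix ι ι R} (hP : IsUnit P)
    {v : ι → R} (hv : v ≠ 0) : v ᵥ* P ≠ 0 := by
  intro h
  apply hv
  rw [← vecMul_one v, ← hP.mul_val_inv, ← vecMul_vecMul, h, zero_vecMul]

variable {K : Type*} [DivisionRing K]

theorem exists_isUnit_mulVec_single_eq_of_ne_zero (z : ι) {c : ι → K} (hcz : c z ≠ 0) :
    ∃ P : Matrix ι ι K, IsUnit P ∧ P *ᵥ Pi.single z 1 = c := by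
  set w : ι → K := fun i => if i = z then 0 else c i * (c z)⁻¹
  set d : ι → K := Function.update 1 z (c z)
  have hN : IsNilpotent (vecMulVec w (Pi.single z 1)) :=
    ⟨2, by simp [sq, vecMulVec_mul_vecMulVec, w]⟩
  have hd : IsUnit (diagonal d) := (Pi.isUnit_iff.2 fun i => by
    by_cases hi : i = z <;> simp [d, hi, hcz]).map (diagonalRingHom ι K)
  refine ⟨(1 + vecMulVec w (Pi.single z 1)) * diagonal d, hN.isUnit_one_add.mul hd, ?_⟩
  ext i
  by_cases hi : i = z <;> simp [d, w, hi, vecMulVec_apply, hcz]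

theorem exists_isUnit_mulVec_single_eq (z : ι) {c : ι → K} (hc : c ≠ 0) :
    ∃ P : Matrix ι ι K, IsUnit P ∧ P *ᵥ Pi.single z 1 = c := by
  rcases ne_or_eq (c z) 0 with hcz | hcz
  · exact exists_isUnit_mulVec_single_eq_of_ne_zero z hcz
  obtain ⟨i₀, hi₀⟩ := Function.ne_iff.1 hc
  have hzi : z ≠ i₀ := by rintro rfl; exact hi₀ hcz
  -- reduce to `c z ≠ 0` by the transvection adding row `i₀` to row `z`
  have hT : IsUnit (1 + single z i₀ (1 : K)) :=
    IsNilpotent.isUnit_one_add ⟨2, by simp [sq, hzi.symm]⟩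
  obtain ⟨P, hP, hPc⟩ := exists_isUnit_mulVec_single_eq_of_ne_zero
    (c := (1 + single z i₀ (1 : K)) *ᵥ c) z
    (by simpa [add_mulVec, single_mulVec, hcz] using hi₀)
  refine ⟨(hT.unit⁻¹ : (Matrix ι ι K)ˣ) * P, hT.unit⁻¹.isUnit.mul hP, ?_⟩
  rw [← mulVec_mulVec, hPc, mulVec_mulVec, hT.val_inv_mul, one_mulVec]

theorem exists_isUnit_single_vecMul_eq (z : ι) {r : ι → K} (hr : r ≠ 0) :
    ∃ Q : Matrix ι ι K, IsUnit Q ∧ Pi.single z 1 ᵥ* Q = r := by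
  obtain ⟨P, hP, hPr⟩ := exists_isUnit_mulVec_single_eq (K := Kᵐᵒᵖ) z (c := MulOpposite.op ∘ r)
    (fun h => hr (funext fun i => MulOpposite.op_injective (congr_fun h i)))
  refine ⟨(RingEquiv.mopMatrix P).unop, (hP.map RingEquiv.mopMatrix).unop, funext fun j => ?_⟩
  simpa using congrArg MulOpposite.unop (congr_fun hPr j)

end InvertibleMatrices

section Rank

variable {K : Type} [DivisionRing K] {m n : ℕ} {A : Matrix (Fin m) (Fin n) K}

theorem mrank_eq_zero_iff : mrank A = 0 ↔ A = 0 := by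
  rw [mrank, Submodule.finrank_eq_zero, Submodule.span_eq_bot, Set.forall_mem_range]
  exact ⟨fun h => funext h, fun h i => by rw [h]; rfl⟩

theorem mrank_le_one_iff : mrank A ≤ 1 ↔ ∃ u v, A = vecMulVec u v := by
  constructor
  · intro h
    obtain ⟨v, hv⟩ := ((Submodule.finrank_le_one_iff_isPrincipal _).1 h).principal
    choose u hu using fun i => Submodule.mem_span_singleton.1
      (hv ▸ Submodule.subset_span (Set.mem_range_self i))
    exact ⟨u, v, by ext i j; simp [vecMulVec_apply, ← hu i]⟩
  · rintro ⟨u, v, rfl⟩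
    calc mrank (vecMulVec u v)
        ≤ Module.finrank K (Submodule.span K ({v} : Set (Fin n → K))) := by
          refine Submodule.finrank_mono (Submodule.span_le.2 ?_)
          rintro _ ⟨i, rfl⟩
          exact Submodule.mem_span_singleton.2 ⟨u i, by ext j; simp [vecMulVec_apply]⟩
      _ ≤ 1 := by simpa using finrank_span_le_card ({v} : Set (Fin n → K))

theorem mrank_eq_one_iff_s10 : mrank A = 1 ↔ mrank A ≤ 1 ∧ A ≠ 0 := by
  rw [Ne, ← mrank_eq_zero_iff]
  omega

theorem mrank_vecMulVec_eq_one {u : Fin m → K} {v : Fin n → K} (hu : u ≠ 0) (hv : v ≠ 0) :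
    mrank (vecMulVec u v) = 1 := by
  refine mrank_eq_one_iff_s10.2 ⟨mrank_le_one_iff.2 ⟨u, v, rfl⟩, fun h => ?_⟩
  obtain ⟨i, hi⟩ := Function.ne_iff.1 hu
  obtain ⟨j, hj⟩ := Function.ne_iff.1 hv
  exact mul_ne_zero hi hj congr($h i j)

theorem exists_eq_mul_or_smul_eq_of_mrank_sub_le_one {u x : Fin m → K} {v y : Fin n → K}
    (hu : u ≠ 0) (hv : v ≠ 0) (h : mrank (vecMulVec u v - vecMulVec x y) ≤ 1) :
    (∃ μ : K, x = fun i => u i * μ) ∨ ∃ a : K, y = a • v := by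
  refine or_iff_not_imp_right.2 fun hy => ?_
  simp only [not_exists] at hy
  have hind := LinearIndependent.pair_iff.1 <|
    (LinearIndependent.pair_iff' hv).2 fun a h => hy a h.symm
  obtain ⟨s, w, hsw⟩ := mrank_le_one_iff.1 h
  have hrow (i) : u i • v - x i • y = s i • w := by
    ext j
    simpa [vecMulVec_apply] using congr_fun (congr_fun hsw i) j
  obtain ⟨i₀, hi₀⟩ := Function.ne_iff.1 hu
  have hs : s i₀ ≠ 0 := by
    intro hs
    have := hrow i₀
    rw [hs, zero_smul, sub_eq_add_neg, ← neg_smul] at this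
    exact hi₀ (hind _ _ this).1
  -- `v`, `y` are independent and every row `u i • v - x i • y` is a multiple of
  -- `w = α • v + β • y`; comparing coefficients gives `u i = s i * α`, `x i = -(s i * β)`
  set α := (s i₀)⁻¹ * u i₀
  set β := -((s i₀)⁻¹ * x i₀)
  have hα : α ≠ 0 := mul_ne_zero (inv_ne_zero hs) hi₀
  have hw : w = α • v + β • y := by
    have := congrArg ((s i₀)⁻¹ • ·) (hrow i₀)
    simp only [smul_sub, smul_smul, inv_mul_cancel₀ hs, one_smul] at this
    rw [← this, neg_smul, sub_eq_add_neg]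
  clear_value α β
  refine ⟨-(α⁻¹ * β), funext fun i => ?_⟩
  obtain ⟨hu', hx'⟩ := hind (u i - s i * α) (-x i - s i * β) <| by
    have := hrow i
    rw [hw, smul_add, smul_smul, smul_smul, ← sub_eq_zero] at this
    rw [sub_smul, sub_smul, neg_smul, ← this]
    abel
  have hx : x i = -(s i * β) := by
    rw [eq_neg_iff_add_eq_zero, ← neg_eq_zero, neg_add, ← sub_eq_add_neg, hx']
  rw [hx, sub_eq_zero.1 hu', mul_assoc, mul_neg, mul_inv_cancel_left₀ hα, mul_neg]

end Rank

section Lines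

variable {K : Type} [DivisionRing K] {m n : ℕ}

def colSet (c : Fin m → K) (B : Matrix (Fin m) (Fin n) K) : Set (Matrix (Fin m) (Fin n) K) :=
  Set.range fun x => vecMulVec c x + B

def rowSet (r : Fin n → K) (B : Matrix (Fin m) (Fin n) K) : Set (Matrix (Fin m) (Fin n) K) :=
  Set.range fun u => vecMulVec u r + B

variable {c c' : Fin m → K} {r r' : Fin n → K} {A B X Y : Matrix (Fin m) (Fin n) K}

theorem mem_colSet_self (c : Fin m → K) (B : Matrix (Fin m) (Fin n) K) : B ∈ colSet c B :=
  ⟨0, by ext; simp [vecMulVec_apply]⟩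

theorem mem_rowSet_self (r : Fin n → K) (B : Matrix (Fin m) (Fin n) K) : B ∈ rowSet r B :=
  ⟨0, by ext; simp⟩

theorem colSet_eq_of_mem (hB : B ∈ colSet c A) : colSet c B = colSet c A := by
  obtain ⟨x₀, rfl⟩ := hB
  ext X
  constructor
  · rintro ⟨x, rfl⟩
    exact ⟨x + x₀, by dsimp only; rw [vecMulVec_add, add_assoc]⟩
  · rintro ⟨x, rfl⟩
    exact ⟨x - x₀, by dsimp only; rw [vecMulVec_sub, ← add_assoc, sub_add_cancel]⟩

theorem rowSet_eq_of_mem (hB : B ∈ rowSet r A) : rowSet r B = rowSet r A := by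
  obtain ⟨u₀, rfl⟩ := hB
  ext X
  constructor
  · rintro ⟨u, rfl⟩
    exact ⟨u + u₀, by dsimp only; rw [add_vecMulVec, add_assoc]⟩
  · rintro ⟨u, rfl⟩
    exact ⟨u - u₀, by dsimp only; rw [sub_vecMulVec, ← add_assoc, sub_add_cancel]⟩

theorem colSet_subset_of_mem (hX : X ∈ colSet c B) (hX' : X ∈ colSet c' B) (hXB : X ≠ B) :
    colSet c' B ⊆ colSet c B := by
  obtain ⟨x, rfl⟩ := hX
  obtain ⟨x', hx'⟩ := hX'
  obtain ⟨⟨μ, rfl⟩, -⟩ := exists_mul_eq_of_vecMulVec_eq (add_right_cancel hx').symm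
    fun h => hXB (by dsimp only; rw [h, zero_add])
  rintro _ ⟨y, rfl⟩
  exact ⟨μ • y, by ext; simp [vecMulVec_apply, mul_assoc]⟩

theorem rowSet_subset_of_mem (hX : X ∈ rowSet r B) (hX' : X ∈ rowSet r' B) (hXB : X ≠ B) :
    rowSet r' B ⊆ rowSet r B := by
  obtain ⟨u, rfl⟩ := hX
  obtain ⟨u', hu'⟩ := hX'
  obtain ⟨-, ⟨a, rfl⟩⟩ := exists_mul_eq_of_vecMulVec_eq (add_right_cancel hu').symm
    fun h => hXB (by dsimp only; rw [h, zero_add])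
  rintro _ ⟨y, rfl⟩
  exact ⟨fun i => y i * a, by ext; simp [vecMulVec_apply, mul_assoc]⟩

theorem colSet_eq_of_mem_of_mem (hX : X ∈ colSet c B) (hX' : X ∈ colSet c' B) (hXB : X ≠ B) :
    colSet c' B = colSet c B :=
  (colSet_subset_of_mem hX hX' hXB).antisymm (colSet_subset_of_mem hX' hX hXB)

theorem rowSet_eq_of_mem_of_mem (hX : X ∈ rowSet r B) (hX' : X ∈ rowSet r' B) (hXB : X ≠ B) :
    rowSet r' B = rowSet r B :=
  (rowSet_subset_of_mem hX hX' hXB).antisymm (rowSet_subset_of_mem hX' hX hXB)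

theorem mrank_sub_le_one_of_mem_colSet (hX : X ∈ colSet c B) (hY : Y ∈ colSet c B) :
    mrank (X - Y) ≤ 1 := by
  obtain ⟨x, rfl⟩ := hX
  obtain ⟨y, rfl⟩ := hY
  exact mrank_le_one_iff.2 ⟨c, x - y, by dsimp only; rw [add_sub_add_right_eq_sub, vecMulVec_sub]⟩

theorem mrank_sub_le_one_of_mem_rowSet (hX : X ∈ rowSet r B) (hY : Y ∈ rowSet r B) :
    mrank (X - Y) ≤ 1 := by
  obtain ⟨u, rfl⟩ := hX
  obtain ⟨v, rfl⟩ := hY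
  exact mrank_le_one_iff.2 ⟨u - v, r, by dsimp only; rw [add_sub_add_right_eq_sub, sub_vecMulVec]⟩

theorem mem_colSet_or_mem_rowSet {u : Fin m → K} {v : Fin n → K} (hu : u ≠ 0) (hv : v ≠ 0)
    (hY : mrank (Y - B) ≤ 1) (hXY : mrank (vecMulVec u v + B - Y) ≤ 1) :
    Y ∈ colSet u B ∨ Y ∈ rowSet v B := by
  obtain ⟨x, y, hxy⟩ := mrank_le_one_iff.1 hY
  obtain rfl : Y = vecMulVec x y + B := by rw [← hxy, sub_add_cancel]
  rw [add_sub_add_right_eq_sub] at hXY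
  rcases exists_eq_mul_or_smul_eq_of_mrank_sub_le_one hu hv hXY with ⟨μ, rfl⟩ | ⟨a, rfl⟩
  · exact Or.inl ⟨μ • y, by ext; simp [vecMulVec_apply, mul_assoc]⟩
  · exact Or.inr ⟨fun i => x i * a, by ext; simp [vecMulVec_apply, mul_assoc]⟩

theorem one_lt_mrank_sub_of_mem_colSet_of_mem_rowSet {u : Fin m → K} {v : Fin n → K}
    (hu : u ≠ 0) (hX : X ∈ rowSet v B) (hXu : X ∉ colSet u B) (hY : Y ∈ colSet u B)
    (hYv : Y ∉ rowSet v B) :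
    1 < mrank (Y - X) := by
  by_contra! hXY
  obtain ⟨w, rfl⟩ := hY
  have hw : w ≠ 0 := by
    rintro rfl
    apply hYv
    convert mem_rowSet_self v B
    ext
    simp [vecMulVec_apply]
  have hXB : X ≠ B := fun h => hXu (h ▸ mem_colSet_self u B)
  rcases mem_colSet_or_mem_rowSet hu hw (mrank_sub_le_one_of_mem_rowSet hX (mem_rowSet_self v B))
    hXY with hXu' | hXw
  · exact hXu hXu'
  · exact hYv (rowSet_eq_of_mem_of_mem hX hXw hXB ▸ ⟨u, rfl⟩)

end Lines

section MaximalSets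

variable {K : Type} [DivisionRing K] {m n : ℕ} {S : Set (Matrix (Fin m) (Fin n) K)}
  {B X : Matrix (Fin m) (Fin n) K}

theorem M1set_eq_range (hm : 0 < m) :
    M1set K m n = Set.range (vecMulVec (Pi.single (⟨0, hm⟩ : Fin m) 1)) := by
  ext X
  constructor
  · intro hX
    refine ⟨X ⟨0, hm⟩, ?_⟩
    ext i j
    by_cases hi : i = ⟨0, hm⟩
    · simp [hi, vecMulVec_apply]
    · simp [hi, vecMulVec_apply, hX i j fun h => hi (Fin.ext h)]
  · rintro ⟨x, rfl⟩ i j hi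
    simp [vecMulVec_apply, Fin.ext_iff, hi]

theorem N1set_eq_range (hn : 0 < n) :
    N1set K m n = Set.range fun u => vecMulVec u (Pi.single (⟨0, hn⟩ : Fin n) 1) := by
  ext X
  constructor
  · intro hX
    refine ⟨fun i => X i ⟨0, hn⟩, ?_⟩
    ext i j
    by_cases hj : j = ⟨0, hn⟩
    · simp [hj, vecMulVec_apply]
    · simp [hj, vecMulVec_apply, hX i j fun h => hj (Fin.ext h)]
  · rintro ⟨u, rfl⟩ i j hj
    simp [vecMulVec_apply, Fin.ext_iff, hj]

theorem image_M1set (hm : 0 < m) (P : Matrix (Fin m) (Fin m) K) (A : Matrix (Fin m) (Fin n) K) :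
    (fun X => P * X + A) '' M1set K m n = colSet (P *ᵥ Pi.single ⟨0, hm⟩ 1) A := by
  rw [M1set_eq_range hm, ← Set.range_comp]
  simp only [Function.comp_def, mul_vecMulVec]
  rfl

theorem image_N1set (hn : 0 < n) (Q : Matrix (Fin n) (Fin n) K) (A : Matrix (Fin m) (Fin n) K) :
    (fun X => X * Q + A) '' N1set K m n = rowSet (Pi.single ⟨0, hn⟩ 1 ᵥ* Q) A := by
  rw [N1set_eq_range hn, ← Set.range_comp]
  simp only [Function.comp_def, vecMulVec_mul]
  rfl

theorem isTypeOne_iff (hm : 0 < m) : IsTypeOne S ↔ ∃ c ≠ 0, ∃ A, S = colSet c A := by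
  constructor
  · rintro ⟨P, A, hP, rfl⟩
    exact ⟨_, mulVec_ne_zero_of_isUnit hP (by simp), A, image_M1set hm P A⟩
  · rintro ⟨c, hc, A, rfl⟩
    obtain ⟨P, hP, rfl⟩ := exists_isUnit_mulVec_single_eq ⟨0, hm⟩ hc
    exact ⟨P, A, hP, (image_M1set hm P A).symm⟩

theorem isTypeTwo_iff (hn : 0 < n) : IsTypeTwo S ↔ ∃ r ≠ 0, ∃ A, S = rowSet r A := by
  constructor
  · rintro ⟨Q, A, hQ, rfl⟩
    exact ⟨_, vecMul_ne_zero_of_isUnit hQ (by simp), A, image_N1set hn Q A⟩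
  · rintro ⟨r, hr, A, rfl⟩
    obtain ⟨Q, hQ, rfl⟩ := exists_isUnit_single_vecMul_eq ⟨0, hn⟩ hr
    exact ⟨Q, A, hQ, (image_N1set hn Q A).symm⟩

theorem isTypeOne_colSet {c : Fin m → K} (hc : c ≠ 0) (B : Matrix (Fin m) (Fin n) K) :
    IsTypeOne (colSet c B) :=
  (isTypeOne_iff (Function.ne_iff.1 hc).choose.pos).2 ⟨c, hc, B, rfl⟩

theorem isTypeTwo_rowSet {r : Fin n → K} (hr : r ≠ 0) (B : Matrix (Fin m) (Fin n) K) :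
    IsTypeTwo (rowSet r B) :=
  (isTypeTwo_iff (Function.ne_iff.1 hr).choose.pos).2 ⟨r, hr, B, rfl⟩

theorem IsTypeOne.exists_eq_colSet (hm : 0 < m) (hS : IsTypeOne S) (hB : B ∈ S) :
    ∃ c ≠ 0, S = colSet c B := by
  obtain ⟨c, hc, A, rfl⟩ := (isTypeOne_iff hm).1 hS
  exact ⟨c, hc, (colSet_eq_of_mem hB).symm⟩

theorem IsTypeTwo.exists_eq_rowSet (hn : 0 < n) (hS : IsTypeTwo S) (hB : B ∈ S) :
    ∃ r ≠ 0, S = rowSet r B := by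
  obtain ⟨r, hr, A, rfl⟩ := (isTypeTwo_iff hn).1 hS
  exact ⟨r, hr, (rowSet_eq_of_mem hB).symm⟩

theorem exists_isTypeOne_mem (B : Matrix (Fin m) (Fin n) K) : ∃ S, IsTypeOne S ∧ B ∈ S :=
  ⟨_, ⟨1, B, isUnit_one, rfl⟩, 0, fun _ _ _ => rfl, by simp⟩

theorem exists_isTypeTwo_mem (B : Matrix (Fin m) (Fin n) K) : ∃ S, IsTypeTwo S ∧ B ∈ S :=
  ⟨_, ⟨1, B, isUnit_one, rfl⟩, 0, fun _ _ _ => rfl, by simp⟩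

theorem exists_isTypeOne_mem_mem (hX : mrank (X - B) ≤ 1) : ∃ L, IsTypeOne L ∧ B ∈ L ∧ X ∈ L := by
  obtain ⟨u, v, huv⟩ := mrank_le_one_iff.1 hX
  by_cases hu : u = 0
  · obtain rfl : X = B := sub_eq_zero.1 (by simp [huv, hu])
    obtain ⟨L, hL, hXL⟩ := exists_isTypeOne_mem X
    exact ⟨L, hL, hXL, hXL⟩
  · refine ⟨_, isTypeOne_colSet hu B, mem_colSet_self u B, v, ?_⟩
    dsimp only
    rw [← huv, sub_add_cancel]

theorem exists_isTypeTwo_mem_mem (hX : mrank (X - B) ≤ 1) : ∃ L, IsTypeTwo L ∧ B ∈ L ∧ X ∈ L := by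
  obtain ⟨u, v, huv⟩ := mrank_le_one_iff.1 hX
  by_cases hv : v = 0
  · obtain rfl : X = B := sub_eq_zero.1 (by rw [huv, hv]; ext; simp [vecMulVec_apply])
    obtain ⟨L, hL, hXL⟩ := exists_isTypeTwo_mem X
    exact ⟨L, hL, hXL, hXL⟩
  · refine ⟨_, isTypeTwo_rowSet hv B, mem_rowSet_self v B, u, ?_⟩
    dsimp only
    rw [← huv, sub_add_cancel]

theorem exists_mem_inter_mrank_sub_eq_one (hm : 0 < m) (hn : 0 < n) {L : Set _}
    (hS : IsTypeOne S) (hL : IsTypeTwo L) (hBS : B ∈ S) (hBL : B ∈ L) :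
    ∃ Z ∈ S ∩ L, mrank (Z - B) = 1 := by
  obtain ⟨c, hc, rfl⟩ := hS.exists_eq_colSet hm hBS
  obtain ⟨r, hr, rfl⟩ := hL.exists_eq_rowSet hn hBL
  exact ⟨_, ⟨⟨r, rfl⟩, ⟨c, rfl⟩⟩, by rw [add_sub_cancel_right]; exact mrank_vecMulVec_eq_one hc hr⟩

theorem IsMaximalSet.mrank_sub_le_one (hm : 0 < m) (hn : 0 < n) (hS : IsMaximalSet S)
    {Y : Matrix (Fin m) (Fin n) K} (hX : X ∈ S) (hY : Y ∈ S) : mrank (X - Y) ≤ 1 := by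
  rcases hS with hS | hS
  · obtain ⟨c, -, rfl⟩ := hS.exists_eq_colSet hm hX
    exact mrank_sub_le_one_of_mem_colSet (mem_colSet_self c X) hY
  · obtain ⟨r, -, rfl⟩ := hS.exists_eq_rowSet hn hX
    exact mrank_sub_le_one_of_mem_rowSet (mem_rowSet_self r X) hY

theorem exists_isMaximalSet_superset (hS : ∀ X ∈ S, ∀ Y ∈ S, mrank (X - Y) ≤ 1) :
    ∃ T, IsMaximalSet T ∧ S ⊆ T := by
  by_cases hsingle : ∃ B, S ⊆ {B}
  · obtain ⟨B, hB⟩ := hsingle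
    obtain ⟨T, hT, hBT⟩ := exists_isTypeOne_mem B
    exact ⟨T, Or.inl hT, hB.trans (Set.singleton_subset_iff.2 hBT)⟩
  simp only [not_exists] at hsingle
  obtain ⟨B, hB, -⟩ := Set.not_subset.1 (hsingle 0)
  obtain ⟨X₀, hX₀, hX₀B⟩ := Set.not_subset.1 (hsingle B)
  obtain ⟨u, v, huv⟩ := mrank_le_one_iff.1 (hS X₀ hX₀ B hB)
  have hdiff : X₀ - B ≠ 0 := sub_ne_zero.2 hX₀B
  have hu : u ≠ 0 := by rintro rfl; exact hdiff (by rw [huv]; ext; simp)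
  have hv : v ≠ 0 := by rintro rfl; exact hdiff (by rw [huv]; ext; simp [vecMulVec_apply])
  obtain rfl : X₀ = vecMulVec u v + B := by rw [← huv, sub_add_cancel]
  by_cases hcol : S ⊆ colSet u B
  · exact ⟨_, Or.inl (isTypeOne_colSet hu B), hcol⟩
  by_cases hrow : S ⊆ rowSet v B
  · exact ⟨_, Or.inr (isTypeTwo_rowSet hv B), hrow⟩
  obtain ⟨X, hX, hXu⟩ := Set.not_subset.1 hcol
  obtain ⟨Y, hY, hYv⟩ := Set.not_subset.1 hrow
  have hXv := (mem_colSet_or_mem_rowSet hu hv (hS X hX B hB) (hS _ hX₀ X hX)).resolve_left hXu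
  have hYu := (mem_colSet_or_mem_rowSet hu hv (hS Y hY B hB) (hS _ hX₀ Y hY)).resolve_right hYv
  exact ((one_lt_mrank_sub_of_mem_colSet_of_mem_rowSet hu hXv hXu hYu hYv).not_ge
    (hS Y hY X hX)).elim

end MaximalSets

section Types

variable {K : Type} [DivisionRing K] {m n : ℕ} {S T L : Set (Matrix (Fin m) (Fin n) K)}
  {B : Matrix (Fin m) (Fin n) K}

def SameType (S T : Set (Matrix (Fin m) (Fin n) K)) : Prop :=
  (IsTypeOne S ∧ IsTypeOne T) ∨ (IsTypeTwo S ∧ IsTypeTwo T)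

def OppositeType (S T : Set (Matrix (Fin m) (Fin n) K)) : Prop :=
  (IsTypeOne S ∧ IsTypeTwo T) ∨ (IsTypeTwo S ∧ IsTypeOne T)

theorem sameType_or_oppositeType (hS : IsMaximalSet S) (hT : IsMaximalSet T) :
    SameType S T ∨ OppositeType S T := by
  rcases hS with hS | hS <;> rcases hT with hT | hT <;> simp [SameType, OppositeType, *]

theorem SameType.isMaximalSet_left (h : SameType S T) : IsMaximalSet S :=
  h.imp And.left And.left

theorem OppositeType.isMaximalSet_right (h : OppositeType S T) : IsMaximalSet T :=
  h.symm.imp And.right And.right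

theorem OppositeType.sameType_or (h : OppositeType S T) (hL : IsMaximalSet L) :
    SameType S L ∨ SameType T L := by
  rcases h with ⟨hS, hT⟩ | ⟨hS, hT⟩ <;> rcases hL with hL | hL <;> simp [SameType, *]

theorem exists_oppositeType_mem (hS : IsMaximalSet S) (B : Matrix (Fin m) (Fin n) K) :
    ∃ T, OppositeType S T ∧ B ∈ T := by
  rcases hS with hS | hS
  · obtain ⟨T, hT, hBT⟩ := exists_isTypeTwo_mem B
    exact ⟨T, Or.inl ⟨hS, hT⟩, hBT⟩
  · obtain ⟨T, hT, hBT⟩ := exists_isTypeOne_mem B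
    exact ⟨T, Or.inr ⟨hS, hT⟩, hBT⟩

theorem SameType.eq_of_mem (hm : 0 < m) (hn : 0 < n) (h : SameType S T)
    {P Q : Matrix (Fin m) (Fin n) K} (hPS : P ∈ S) (hPT : P ∈ T) (hQS : Q ∈ S) (hQT : Q ∈ T)
    (hQP : Q ≠ P) : S = T := by
  rcases h with ⟨hS, hT⟩ | ⟨hS, hT⟩
  · obtain ⟨c, -, rfl⟩ := hS.exists_eq_colSet hm hPS
    obtain ⟨c', -, rfl⟩ := hT.exists_eq_colSet hm hPT
    exact colSet_eq_of_mem_of_mem hQT hQS hQP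
  · obtain ⟨r, -, rfl⟩ := hS.exists_eq_rowSet hn hPS
    obtain ⟨r', -, rfl⟩ := hT.exists_eq_rowSet hn hPT
    exact rowSet_eq_of_mem_of_mem hQT hQS hQP

theorem OppositeType.exists_mem_inter (hm : 0 < m) (hn : 0 < n) (h : OppositeType S L)
    (hBS : B ∈ S) (hBL : B ∈ L) : ∃ Z ∈ S ∩ L, mrank (Z - B) = 1 := by
  rcases h with ⟨hS, hL⟩ | ⟨hS, hL⟩
  · exact exists_mem_inter_mrank_sub_eq_one hm hn hS hL hBS hBL
  · obtain ⟨Z, ⟨hZL, hZS⟩, hZ⟩ := exists_mem_inter_mrank_sub_eq_one hm hn hL hS hBL hBS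
    exact ⟨Z, ⟨hZS, hZL⟩, hZ⟩

theorem SameType.exists_oppositeType_mem_mem {T : Set _} {X : Matrix (Fin m) (Fin n) K}
    (h : SameType S T) (hX : mrank (X - B) ≤ 1) :
    ∃ L, OppositeType S L ∧ OppositeType T L ∧ B ∈ L ∧ X ∈ L := by
  rcases h with ⟨hS, hT⟩ | ⟨hS, hT⟩
  · obtain ⟨L, hL, hBL, hXL⟩ := exists_isTypeTwo_mem_mem hX
    exact ⟨L, Or.inl ⟨hS, hL⟩, Or.inl ⟨hT, hL⟩, hBL, hXL⟩
  · obtain ⟨L, hL, hBL, hXL⟩ := exists_isTypeOne_mem_mem hX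
    exact ⟨L, Or.inr ⟨hS, hL⟩, Or.inr ⟨hT, hL⟩, hBL, hXL⟩

theorem OppositeType.exists_mem_mem {T : Set _} {X : Matrix (Fin m) (Fin n) K}
    (h : OppositeType S T) (hX : mrank (X - B) ≤ 1) :
    ∃ L, OppositeType S L ∧ SameType T L ∧ B ∈ L ∧ X ∈ L := by
  rcases h with ⟨hS, hT⟩ | ⟨hS, hT⟩
  · obtain ⟨L, hL, hBL, hXL⟩ := exists_isTypeTwo_mem_mem hX
    exact ⟨L, Or.inl ⟨hS, hL⟩, Or.inr ⟨hT, hL⟩, hBL, hXL⟩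
  · obtain ⟨L, hL, hBL, hXL⟩ := exists_isTypeOne_mem_mem hX
    exact ⟨L, Or.inr ⟨hS, hL⟩, Or.inl ⟨hT, hL⟩, hBL, hXL⟩

end Types

section Homomorphisms

variable {D D' : Type} [DivisionRing D] [DivisionRing D'] {m n m' n' : ℕ}
  {φ : Matrix (Fin m) (Fin n) D → Matrix (Fin m') (Fin n') D'}
  {S₁ S₂ : Set (Matrix (Fin m) (Fin n) D)} {T₁ T₂ : Set (Matrix (Fin m') (Fin n') D')}
  {B : Matrix (Fin m) (Fin n) D}

def IsGraphHom (φ : Matrix (Fin m) (Fin n) D → Matrix (Fin m') (Fin n') D') : Prop :=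
  ∀ X Y, mrank (X - Y) = 1 → mrank (φ X - φ Y) = 1

theorem IsGraphHom.map_ne (hφ : IsGraphHom φ) {X Y : Matrix (Fin m) (Fin n) D}
    (h : mrank (X - Y) = 1) : φ X ≠ φ Y := by
  intro hXY
  have := hφ X Y h
  rw [hXY, sub_self, mrank_eq_zero_iff.2 rfl] at this
  exact zero_ne_one this

theorem IsGraphHom.exists_isMaximalSet_image_subset (hm : 0 < m) (hn : 0 < n) (hφ : IsGraphHom φ)
    (hS : IsMaximalSet S₁) : ∃ T, IsMaximalSet T ∧ φ '' S₁ ⊆ T := by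
  refine exists_isMaximalSet_superset ?_
  rintro _ ⟨X, hX, rfl⟩ _ ⟨Y, hY, rfl⟩
  rcases (hS.mrank_sub_le_one hm hn hX hY).lt_or_eq with h | h
  · rw [Nat.lt_one_iff, mrank_eq_zero_iff, sub_eq_zero] at h
    rw [h, sub_self, mrank_eq_zero_iff.2 rfl]
    exact zero_le_one
  · exact (hφ X Y h).le

theorem degenerate_of_oppositeType (hB : mrank B ≤ 1) (hT : OppositeType T₁ T₂)
    (h₁ : φ B ∈ T₁) (h₂ : φ B ∈ T₂) (hball : φ '' {X | mrank (X - B) ≤ 1} ⊆ T₁ ∪ T₂) :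
    Degenerate φ := by
  rcases hT with ⟨hT₁, hT₂⟩ | ⟨hT₁, hT₂⟩
  · exact ⟨B, hB, T₁, T₂, hT₁, hT₂, ⟨h₁, h₂⟩, hball⟩
  · exact ⟨B, hB, T₂, T₁, hT₂, hT₁, ⟨h₂, h₁⟩, Set.union_comm T₁ T₂ ▸ hball⟩

theorem eq_of_image_subset_of_oppositeType (hm : 0 < m) (hn : 0 < n) (hm' : 0 < m')
    (hn' : 0 < n') (hφ : IsGraphHom φ) (hS : OppositeType S₁ S₂) (hB₁ : B ∈ S₁) (hB₂ : B ∈ S₂)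
    (hT : SameType T₁ T₂) (h₁ : φ '' S₁ ⊆ T₁) (h₂ : φ '' S₂ ⊆ T₂) : T₁ = T₂ := by
  obtain ⟨Z, ⟨hZ₁, hZ₂⟩, hZ⟩ := hS.exists_mem_inter hm hn hB₁ hB₂
  exact hT.eq_of_mem hm' hn' (h₁ ⟨B, hB₁, rfl⟩) (h₂ ⟨B, hB₂, rfl⟩) (h₁ ⟨Z, hZ₁, rfl⟩)
    (h₂ ⟨Z, hZ₂, rfl⟩) (hφ.map_ne hZ)

theorem degenerate_of_sameType_of_oppositeType (hm : 0 < m) (hn : 0 < n) (hm' : 0 < m')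
    (hn' : 0 < n') (hφ : IsGraphHom φ) (hB : mrank B ≤ 1) (hS : SameType S₁ S₂) (hB₁ : B ∈ S₁)
    (hB₂ : B ∈ S₂) (hT : OppositeType T₁ T₂) (h₁ : φ '' S₁ ⊆ T₁) (h₂ : φ '' S₂ ⊆ T₂) :
    Degenerate φ := by
  refine degenerate_of_oppositeType hB hT (h₁ ⟨B, hB₁, rfl⟩) (h₂ ⟨B, hB₂, rfl⟩) ?_
  rintro _ ⟨X, hX, rfl⟩
  obtain ⟨L, hL₁, hL₂, hBL, hXL⟩ := hS.exists_oppositeType_mem_mem hX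
  obtain ⟨T, hTmax, hLT⟩ := hφ.exists_isMaximalSet_image_subset hm hn hL₁.isMaximalSet_right
  have hφX : φ X ∈ T := hLT ⟨X, hXL, rfl⟩
  rcases hT.sameType_or hTmax with h | h
  · exact Or.inl (eq_of_image_subset_of_oppositeType hm hn hm' hn' hφ hL₁ hB₁ hBL h h₁ hLT ▸ hφX)
  · exact Or.inr (eq_of_image_subset_of_oppositeType hm hn hm' hn' hφ hL₂ hB₂ hBL h h₂ hLT ▸ hφX)

theorem degenerate_of_oppositeType_of_sameType (hm : 0 < m) (hn : 0 < n) (hm' : 0 < m')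
    (hn' : 0 < n') (hφ : IsGraphHom φ) (hB : mrank B ≤ 1) (hS : OppositeType S₁ S₂)
    (hB₁ : B ∈ S₁) (hB₂ : B ∈ S₂) (hT : SameType T₁ T₂) (h₁ : φ '' S₁ ⊆ T₁)
    (h₂ : φ '' S₂ ⊆ T₂) : Degenerate φ := by
  obtain rfl := eq_of_image_subset_of_oppositeType hm hn hm' hn' hφ hS hB₁ hB₂ hT h₁ h₂
  by_cases hball : φ '' {X | mrank (X - B) ≤ 1} ⊆ T₁
  · obtain ⟨T, hT', hφBT⟩ := exists_oppositeType_mem hT.isMaximalSet_left (φ B)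
    exact degenerate_of_oppositeType hB hT' (h₁ ⟨B, hB₁, rfl⟩) hφBT
      (hball.trans Set.subset_union_left)
  obtain ⟨_, ⟨X, hX, rfl⟩, hφX⟩ := Set.not_subset.1 hball
  obtain ⟨L, hL₁, hL₂, hBL, hXL⟩ := hS.exists_mem_mem hX
  obtain ⟨T, hTmax, hLT⟩ := hφ.exists_isMaximalSet_image_subset hm hn hL₁.isMaximalSet_right
  rcases sameType_or_oppositeType hT.isMaximalSet_left hTmax with h | h
  · exact absurd ((eq_of_image_subset_of_oppositeType hm hn hm' hn' hφ hL₁ hB₁ hBL h h₁ hLT).symm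
      ▸ hLT ⟨X, hXL, rfl⟩) hφX
  · exact degenerate_of_sameType_of_oppositeType hm hn hm' hn' hφ hB hL₂ hB₂ hBL h h₂ hLT

end Homomorphisms

theorem nondegenerate_preserves_type_relation_general
    {D D' : Type} [DivisionRing D] [DivisionRing D'] {m n m' n' : ℕ}
    (hm : 2 ≤ m) (hn : 2 ≤ n) (hm' : 2 ≤ m') (hn' : 2 ≤ n')
    (φ : Matrix (Fin m) (Fin n) D → Matrix (Fin m') (Fin n') D')
    (hhom : ∀ X Y, mrank (X - Y) = 1 → mrank (φ X - φ Y) = 1)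
    (hnd : ¬ Degenerate φ)
    (M N : Set (Matrix (Fin m) (Fin n) D))
    (hMmax : IsMaximalSet M) (hNmax : IsMaximalSet N)
    (h0M : (0 : Matrix (Fin m) (Fin n) D) ∈ M) (hne : (M ∩ N).Nonempty) :
    ∃ M' N' : Set (Matrix (Fin m') (Fin n') D'),
      IsMaximalSet M' ∧ IsMaximalSet N' ∧ φ '' M ⊆ M' ∧ φ '' N ⊆ N' ∧
      (((IsTypeOne M ∧ IsTypeOne N) ∨ (IsTypeTwo M ∧ IsTypeTwo N)) →
        ((IsTypeOne M' ∧ IsTypeOne N') ∨ (IsTypeTwo M' ∧ IsTypeTwo N'))) ∧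
      (((IsTypeOne M ∧ IsTypeTwo N) ∨ (IsTypeTwo M ∧ IsTypeOne N)) →
        ((IsTypeOne M' ∧ IsTypeTwo N') ∨ (IsTypeTwo M' ∧ IsTypeOne N'))) := by
  have hm₀ : 0 < m := by omega
  have hn₀ : 0 < n := by omega
  have hm'₀ : 0 < m' := by omega
  have hn'₀ : 0 < n' := by omega
  obtain ⟨B, hBM, hBN⟩ := hne
  have hB : mrank B ≤ 1 := by simpa using hMmax.mrank_sub_le_one hm₀ hn₀ hBM h0M
  obtain ⟨M', hM', hMM'⟩ := IsGraphHom.exists_isMaximalSet_image_subset hm₀ hn₀ hhom hMmax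
  obtain ⟨N', hN', hNN'⟩ := IsGraphHom.exists_isMaximalSet_image_subset hm₀ hn₀ hhom hNmax
  refine ⟨M', N', hM', hN', hMM', hNN', fun hMN => ?_, fun hMN => ?_⟩
  · refine (sameType_or_oppositeType hM' hN').resolve_right fun hT => hnd ?_
    exact degenerate_of_sameType_of_oppositeType hm₀ hn₀ hm'₀ hn'₀ hhom hB hMN hBM hBN hT hMM' hNN'
  · refine (sameType_or_oppositeType hM' hN').resolve_left fun hT => hnd ?_
    exact degenerate_of_oppositeType_of_sameType hm₀ hn₀ hm'₀ hn'₀ hhom hB hMN hBM hBN hT hMM' hNN'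

/-- Lemma 3.7(b). -/
theorem nondegenerate_preserves_type_relation
    {D D' : Type} [DivisionRing D] [DivisionRing D'] {m n m' n' : ℕ}
    (hm : 2 ≤ m) (hn : 2 ≤ n) (hm' : 2 ≤ m') (hn' : 2 ≤ n')
    (φ : Matrix (Fin m) (Fin n) D → Matrix (Fin m') (Fin n') D')
    (hhom : ∀ X Y, mrank (X - Y) = 1 → mrank (φ X - φ Y) = 1)
    (hnd : ¬ Degenerate φ) (h0 : φ 0 = 0)
    (M N : Set (Matrix (Fin m) (Fin n) D))
    (hMmax : IsMaximalSet M) (hNmax : IsMaximalSet N) (hMN : M ≠ N)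
    (h0M : (0 : Matrix (Fin m) (Fin n) D) ∈ M) (hne : (M ∩ N).Nonempty) :
    ∃ M' N' : Set (Matrix (Fin m') (Fin n') D'),
      IsMaximalSet M' ∧ IsMaximalSet N' ∧ φ '' M ⊆ M' ∧ φ '' N ⊆ N' ∧
      (((IsTypeOne M ∧ IsTypeOne N) ∨ (IsTypeTwo M ∧ IsTypeTwo N)) →
        ((IsTypeOne M' ∧ IsTypeOne N') ∨ (IsTypeTwo M' ∧ IsTypeTwo N'))) ∧
      (((IsTypeOne M ∧ IsTypeTwo N) ∨ (IsTypeTwo M ∧ IsTypeOne N)) →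
        ((IsTypeOne M' ∧ IsTypeTwo N') ∨ (IsTypeTwo M' ∧ IsTypeOne N'))) :=
  nondegenerate_preserves_type_relation_general hm hn hm' hn' φ hhom hnd M N hMmax hNmax h0M hne
end
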